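/- arXiv:2309.10866 — 10 statements merged into one kernel-verified Lean document; each statement's English description precedes it below -/
import Mathlib

section
/- If S is a subset of the projective plane P^2(F_q) with |S| = q+2, and there exists a point P in S such that no line through P contains at least three points of S, then there is a projective change of coordinates under which S equals S_f := {(c : f(c) : 1) : c in F_q} ∪ {(1:0:0), (0:1:0)} for some polynomial f(X) in F_q[X]. -/
open Polynomial

noncomputable section

lemma vec3_ne_zero_last {F : Type} [Field F] (c d : F) : ![c, d, 1] ≠ 0 := by
  intro h; have := congrFun h 2; simp at this

lemma vec3_e0_ne_zero {F : Type} [Field F] : (![1, 0, 0] : Fin 3 → F) ≠ 0 := by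
  intro h; have := congrFun h 0; simp at this

lemma vec3_e1_ne_zero {F : Type} [Field F] : (![0, 1, 0] : Fin 3 → F) ≠ 0 := by
  intro h; have := congrFun h 1; simp at this

/-- The set `S_f = {(c : f(c) : 1) : c ∈ F_q} ∪ {(1:0:0), (0:1:0)}` in `ℙ²(F_q)`. -/
def Sf {F : Type} [Field F] (f : Polynomial F) : Set (Projectivization F (Fin 3 → F)) :=
  {p | ∃ c : F, p = Projectivization.mk F ![c, f.eval c, 1] (vec3_ne_zero_last c (f.eval c))}
    ∪ {Projectivization.mk F ![1, 0, 0] vec3_e0_ne_zero,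
       Projectivization.mk F ![0, 1, 0] vec3_e1_ne_zero}

/-! After a projective change of coordinates, `P = (0:1:0)` and a second point of `S` is
`(1:0:0)`. The line `z = 0` through these two points contains no further point of `S`, so every
other point of `S` is affine, `(a : b : 1)`. The line `x = a z` passes through `(0:1:0)`, so each
abscissa `a` occurs at most once; as there are `q` affine points, it occurs exactly once. Hence `S`
consists of the two points at infinity and the graph of a function `F → F`, which is a polynomial
function by Lagrange interpolation. -/

open Projectivization
open scoped LinearAlgebra.Projectivization

lemma exists_polynomial_eval_eq {F : Type*} [Field F] [Fintype F] (b : F → F) :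
    ∃ f : F[X], ∀ a, f.eval a = b a := by
  classical
  exact ⟨Lagrange.interpolate Finset.univ id b, fun a ↦ by
    simpa using Lagrange.eval_interpolate_at_node b (Set.injOn_id _) (Finset.mem_univ a)⟩

section LinesThrough

variable {K V : Type*} [Field K] [AddCommGroup V] [Module K V]

def AtMostTwoOnLinesThrough (S : Set (ℙ K V)) (P : ℙ K V) : Prop :=
  ∀ W : Submodule K V, Module.finrank K W = 2 → P.submodule ≤ W →
    {x ∈ S | x.submodule ≤ W}.ncard ≤ 2

lemma Projectivization.submodule_mk_le_iff {v : V} (hv : v ≠ 0) {W : Submodule K V} :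
    (mk K v hv).submodule ≤ W ↔ v ∈ W := by
  rw [submodule_mk, Submodule.span_singleton_le_iff_mem]

lemma Projectivization.submodule_map {U : Type*} [AddCommGroup U] [Module K U] {f : V →ₗ[K] U}
    (hf : Function.Injective f) (x : ℙ K V) : (map f hf x).submodule = x.submodule.map f := by
  induction x using Projectivization.ind with
  | h v hv => rw [map_mk, submodule_mk, submodule_mk, Submodule.map_span, Set.image_singleton]

lemma AtMostTwoOnLinesThrough.image {S : Set (ℙ K V)} {P : ℙ K V}
    (h : AtMostTwoOnLinesThrough S P) (g : V ≃ₗ[K] V) :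
    AtMostTwoOnLinesThrough (map g.toLinearMap g.injective '' S)
      (map g.toLinearMap g.injective P) := by
  intro W hW hPW
  have hle (x : ℙ K V) :
      (map g.toLinearMap g.injective x).submodule ≤ W ↔
        x.submodule ≤ W.comap g.toLinearMap := by
    rw [submodule_map, Submodule.map_le_iff_le_comap]
  have hWg : Module.finrank K (W.comap g.toLinearMap) = 2 := by
    rw [Submodule.comap_equiv_eq_map_symm, LinearEquiv.finrank_map_eq, hW]
  have hsep : {x ∈ map g.toLinearMap g.injective '' S | x.submodule ≤ W} =
      map g.toLinearMap g.injective '' {x ∈ S | x.submodule ≤ W.comap g.toLinearMap} := by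
    ext y
    constructor
    · rintro ⟨⟨x, hxS, rfl⟩, hxW⟩
      exact ⟨x, ⟨hxS, (hle x).1 hxW⟩, rfl⟩
    · rintro ⟨x, ⟨hxS, hxW⟩, rfl⟩
      exact ⟨⟨x, hxS, rfl⟩, (hle x).2 hxW⟩
  rw [hsep, Set.ncard_image_of_injective _ (Projectivization.map_injective _ _)]
  exact h _ hWg ((hle P).1 hPW)

lemma AtMostTwoOnLinesThrough.not_three [Finite (ℙ K V)] {S : Set (ℙ K V)} {P : ℙ K V}
    (h : AtMostTwoOnLinesThrough S P) {W : Submodule K V} (hW : Module.finrank K W = 2)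
    (hPW : P.submodule ≤ W) {x y z : ℙ K V} (hx : x ∈ S) (hy : y ∈ S) (hz : z ∈ S)
    (hxW : x.submodule ≤ W) (hyW : y.submodule ≤ W) (hzW : z.submodule ≤ W) (hxy : x ≠ y)
    (hxz : x ≠ z) (hyz : y ≠ z) : False := by
  have hthree : 2 < {x ∈ S | x.submodule ≤ W}.ncard := (Set.two_lt_ncard_iff).2
    ⟨x, y, z, ⟨hx, hxW⟩, ⟨hy, hyW⟩, ⟨hz, hzW⟩, hxy, hxz, hyz⟩
  exact (h W hW hPW).not_gt hthree

lemma exists_linearEquiv_map_eq_map_eq {P Q P' Q' : ℙ K V} (h : P ≠ Q) (h' : P' ≠ Q') :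
    ∃ g : V ≃ₗ[K] V, map g.toLinearMap g.injective P = P' ∧
      map g.toLinearMap g.injective Q = Q' :=
  MulAction.is_two_pretransitive_iff.1 (linearEquiv_is_two_pretransitive K V) h h'

end LinesThrough

section PlaneCoordinates

variable {F : Type} [Field F]

def affinePoint (a b : F) : ℙ F (Fin 3 → F) := mk F ![a, b, 1] (vec3_ne_zero_last a b)

def xInf : ℙ F (Fin 3 → F) := mk F ![1, 0, 0] vec3_e0_ne_zero

def yInf : ℙ F (Fin 3 → F) := mk F ![0, 1, 0] vec3_e1_ne_zero

def lineAtInfinity : Submodule F (Fin 3 → F) := LinearMap.ker (LinearMap.proj 2)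

def verticalLine (a : F) : Submodule F (Fin 3 → F) :=
  LinearMap.ker (LinearMap.proj 0 - a • LinearMap.proj 2)

lemma mem_lineAtInfinity {v : Fin 3 → F} : v ∈ lineAtInfinity ↔ v 2 = 0 := Iff.rfl

lemma mem_verticalLine {a : F} {v : Fin 3 → F} : v ∈ verticalLine a ↔ v 0 = a * v 2 := by
  simp [verticalLine, sub_eq_zero]

lemma finrank_ker_eq_two {φ : Module.Dual F (Fin 3 → F)} (hφ : φ ≠ 0) :
    Module.finrank F (LinearMap.ker φ) = 2 := by
  have := φ.finrank_ker_add_one_of_ne_zero hφ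
  simp only [Module.finrank_fin_fun] at this
  omega

lemma finrank_lineAtInfinity : Module.finrank F (lineAtInfinity (F := F)) = 2 :=
  finrank_ker_eq_two fun h ↦ by simpa using LinearMap.congr_fun h (Pi.single 2 1)

lemma finrank_verticalLine (a : F) : Module.finrank F (verticalLine a) = 2 :=
  finrank_ker_eq_two fun h ↦ by simpa using LinearMap.congr_fun h (Pi.single 0 1)

lemma affinePoint_inj {a b a' b' : F} :
    affinePoint a b = affinePoint a' b' ↔ a = a' ∧ b = b' := by
  refine ⟨fun h ↦ ?_, by rintro ⟨rfl, rfl⟩; rfl⟩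
  obtain ⟨u, hu⟩ := (mk_eq_mk_iff _ _ _ _ _).1 h
  have h0 := congrFun hu 0
  have h1 := congrFun hu 1
  have h2 := congrFun hu 2
  simp only [Units.smul_def, Pi.smul_apply, smul_eq_mul, Matrix.cons_val, mul_one] at h0 h1 h2
  simp_all

lemma xInf_ne_yInf : (xInf : ℙ F (Fin 3 → F)) ≠ yInf := by
  intro h
  obtain ⟨u, hu⟩ := (mk_eq_mk_iff _ _ _ _ _).1 h
  simpa using congrFun hu 0

lemma eq_affinePoint_or_le_lineAtInfinity (x : ℙ F (Fin 3 → F)) :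
    (∃ a b, x = affinePoint a b) ∨ x.submodule ≤ lineAtInfinity := by
  induction x using Projectivization.ind with
  | h v hv =>
    rw [submodule_mk_le_iff, mem_lineAtInfinity]
    refine (em (v 2 = 0)).symm.imp_left fun h2 ↦ ⟨v 0 / v 2, v 1 / v 2, ?_⟩
    rw [affinePoint, mk_eq_mk_iff]
    refine ⟨Units.mk0 (v 2) h2, funext fun i ↦ ?_⟩
    fin_cases i <;> simp [Units.smul_def, mul_div_cancel₀ _ h2]

lemma xInf_le_lineAtInfinity : (xInf : ℙ F (Fin 3 → F)).submodule ≤ lineAtInfinity := by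
  simp [xInf, mem_lineAtInfinity]

lemma yInf_le_lineAtInfinity : (yInf : ℙ F (Fin 3 → F)).submodule ≤ lineAtInfinity := by
  simp [yInf, mem_lineAtInfinity]

lemma yInf_le_verticalLine (a : F) : (yInf : ℙ F (Fin 3 → F)).submodule ≤ verticalLine a := by
  simp [yInf, mem_verticalLine]

lemma affinePoint_le_verticalLine (a b : F) : (affinePoint a b).submodule ≤ verticalLine a := by
  simp [affinePoint, mem_verticalLine]

lemma affinePoint_not_le_lineAtInfinity (a b : F) :
    ¬(affinePoint a b).submodule ≤ lineAtInfinity := by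
  simp [affinePoint, mem_lineAtInfinity]

lemma affinePoint_ne_xInf (a b : F) : affinePoint a b ≠ xInf := fun h ↦
  affinePoint_not_le_lineAtInfinity a b (h ▸ xInf_le_lineAtInfinity)

lemma affinePoint_ne_yInf (a b : F) : affinePoint a b ≠ yInf := fun h ↦
  affinePoint_not_le_lineAtInfinity a b (h ▸ yInf_le_lineAtInfinity)

end PlaneCoordinates

section Normalized

variable {F : Type} [Field F] [Fintype F] {T : Set (ℙ F (Fin 3 → F))}

lemma eq_xInf_or_eq_yInf_of_le_lineAtInfinity (hT : AtMostTwoOnLinesThrough T yInf)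
    (hx : xInf ∈ T) (hy : yInf ∈ T) {x : ℙ F (Fin 3 → F)} (hxT : x ∈ T)
    (hxl : x.submodule ≤ lineAtInfinity) : x = xInf ∨ x = yInf := by
  by_contra! h
  exact hT.not_three finrank_lineAtInfinity yInf_le_lineAtInfinity hx hy hxT
    xInf_le_lineAtInfinity yInf_le_lineAtInfinity hxl xInf_ne_yInf h.1.symm h.2.symm

lemma eq_of_affinePoint_mem (hT : AtMostTwoOnLinesThrough T yInf) (hy : yInf ∈ T)
    {a b b' : F} (hb : affinePoint a b ∈ T) (hb' : affinePoint a b' ∈ T) : b = b' := by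
  by_contra hne
  exact hT.not_three (finrank_verticalLine a) (yInf_le_verticalLine a) hy hb hb'
    (yInf_le_verticalLine a) (affinePoint_le_verticalLine a b) (affinePoint_le_verticalLine a b')
    (affinePoint_ne_yInf a b).symm (affinePoint_ne_yInf a b').symm
    fun h ↦ hne (affinePoint_inj.1 h).2

lemma ncard_affinePoint_mem (hT : AtMostTwoOnLinesThrough T yInf) (hx : xInf ∈ T)
    (hy : yInf ∈ T) (hcard : T.ncard = Fintype.card F + 2) :
    {p : F × F | affinePoint p.1 p.2 ∈ T}.ncard = Fintype.card F := by
  set A := {p : F × F | affinePoint p.1 p.2 ∈ T}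
  have hsplit : T = {xInf, yInf} ∪ (fun p : F × F ↦ affinePoint p.1 p.2) '' A := by
    ext x
    refine ⟨fun hxT ↦ ?_, ?_⟩
    · rcases eq_affinePoint_or_le_lineAtInfinity x with ⟨a, b, rfl⟩ | hxl
      · exact Or.inr ⟨(a, b), hxT, rfl⟩
      · exact Or.inl (eq_xInf_or_eq_yInf_of_le_lineAtInfinity hT hx hy hxT hxl)
    · rintro ((rfl | rfl) | ⟨p, hp, rfl⟩)
      exacts [hx, hy, hp]
  have hdisj : Disjoint {xInf, yInf} ((fun p : F × F ↦ affinePoint p.1 p.2) '' A) := by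
    rw [Set.disjoint_right]
    rintro _ ⟨p, -, rfl⟩ (h | h)
    exacts [affinePoint_ne_xInf _ _ h, affinePoint_ne_yInf _ _ h]
  have hinj : Function.Injective fun p : F × F ↦ affinePoint p.1 p.2 := fun p q h ↦
    Prod.ext (affinePoint_inj.1 h).1 (affinePoint_inj.1 h).2
  rw [hsplit, Set.ncard_union_eq hdisj, Set.ncard_pair xInf_ne_yInf,
    Set.ncard_image_of_injective _ hinj] at hcard
  omega

lemma exists_affinePoint_mem (hT : AtMostTwoOnLinesThrough T yInf) (hx : xInf ∈ T)
    (hy : yInf ∈ T) (hcard : T.ncard = Fintype.card F + 2) (a : F) :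
    ∃ b, affinePoint a b ∈ T := by
  set A := {p : F × F | affinePoint p.1 p.2 ∈ T}
  have hinj : Set.InjOn Prod.fst A := fun p hp q hq h ↦
    Prod.ext h (eq_of_affinePoint_mem hT hy (a := p.1) hp (h ▸ hq))
  have hfst : Prod.fst '' A = Set.univ := by
    refine Set.eq_of_subset_of_ncard_le (Set.subset_univ _) ?_
    rw [hinj.ncard_image, ncard_affinePoint_mem hT hx hy hcard, Set.ncard_univ,
      Nat.card_eq_fintype_card]
  obtain ⟨p, hp, rfl⟩ := hfst ▸ Set.mem_univ a
  exact ⟨p.2, hp⟩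

theorem exists_eq_Sf (hT : AtMostTwoOnLinesThrough T yInf) (hx : xInf ∈ T) (hy : yInf ∈ T)
    (hcard : T.ncard = Fintype.card F + 2) : ∃ f : F[X], T = Sf f := by
  choose b hb using exists_affinePoint_mem hT hx hy hcard
  obtain ⟨f, hf⟩ := exists_polynomial_eval_eq b
  refine ⟨f, Set.ext fun x ↦ ⟨fun hxT ↦ ?_, ?_⟩⟩
  · rcases eq_affinePoint_or_le_lineAtInfinity x with ⟨a, c, rfl⟩ | hxl
    · refine Or.inl ⟨a, ?_⟩
      change affinePoint a c = affinePoint a (f.eval a)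
      rw [hf, eq_of_affinePoint_mem hT hy hxT (hb a)]
    · exact Or.inr (eq_xInf_or_eq_yInf_of_le_lineAtInfinity hT hx hy hxT hxl)
  · rintro (⟨a, rfl⟩ | rfl | rfl)
    · change affinePoint a (f.eval a) ∈ T
      exact hf a ▸ hb a
    exacts [hx, hy]

end Normalized

theorem statement0 (F : Type) [Field F] [Fintype F]
    (S : Set (Projectivization F (Fin 3 → F)))
    (hcard : S.ncard = Fintype.card F + 2)
    (P : Projectivization F (Fin 3 → F)) (hP : P ∈ S)
    (hline : ∀ W : Submodule F (Fin 3 → F), Module.finrank F W = 2 →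
      P.submodule ≤ W → {x ∈ S | x.submodule ≤ W}.ncard ≤ 2) :
    ∃ (f : Polynomial F) (g : (Fin 3 → F) ≃ₗ[F] (Fin 3 → F)),
      Projectivization.map g.toLinearMap g.injective '' S = Sf f := by
  obtain ⟨Q, hQ, hQP⟩ := Set.exists_ne_of_one_lt_ncard (s := S) (by omega) P
  obtain ⟨g, hgQ, hgP⟩ := exists_linearEquiv_map_eq_map_eq hQP xInf_ne_yInf
  have hT : AtMostTwoOnLinesThrough (map g.toLinearMap g.injective '' S) yInf :=
    hgP ▸ AtMostTwoOnLinesThrough.image hline g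
  have hTcard : (map g.toLinearMap g.injective '' S).ncard = Fintype.card F + 2 := by
    rw [Set.ncard_image_of_injective _ (Projectivization.map_injective _ _), hcard]
  obtain ⟨f, hf⟩ := exists_eq_Sf hT ⟨Q, hQ, hgQ⟩ ⟨P, hP, hgP⟩ hTcard
  exact ⟨f, g, hf⟩
end
end

section
/- Let q > 2 be a prime power and f(X) in F_q[X] with deg(f) < q. Then f(X) permutes F_q if and only if each line through the point (1:0:0) contains at most two points of S_f. -/
open Polynomial

noncomputable section

-- auxiliary lemmas

lemma three_vecs_not_in {F : Type} [Field F] (W : Submodule F (Fin 3 → F))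
    (hW2 : Module.finrank F W = 2) (b : F)
    (h0 : ![1, 0, 0] ∈ W) (h1 : ![0, 1, 0] ∈ W) (hb : ![0, b, 1] ∈ W) : False := by
  have h2 : ![(0:F), 0, 1] ∈ W := by
    have hm := W.sub_mem hb (W.smul_mem b h1)
    have : ![(0:F), 0, 1] = ![0, b, 1] - b • ![0, 1, 0] := by
      funext i; fin_cases i <;> simp
    rwa [this]
  have htop : W = ⊤ := by
    rw [eq_top_iff]
    rintro v -
    have hv : v = v 0 • ![1, 0, 0] + v 1 • ![0, 1, 0] + v 2 • ![0, 0, 1] := by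
      funext i; fin_cases i <;> simp
    rw [hv]
    exact W.add_mem (W.add_mem (W.smul_mem _ h0) (W.smul_mem _ h1)) (W.smul_mem _ h2)
  rw [htop, finrank_top, Module.finrank_fin_fun] at hW2
  omega

lemma mk_pt_ne_e0 {F : Type} [Field F] (c y : F) :
    Projectivization.mk F ![c, y, 1] (vec3_ne_zero_last c y)
      ≠ Projectivization.mk F ![1, 0, 0] vec3_e0_ne_zero := by
  intro h
  rw [Projectivization.mk_eq_mk_iff] at h
  obtain ⟨a, ha⟩ := h
  have := congrFun ha 2
  simp [Units.smul_def] at this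

lemma mk_pt_inj {F : Type} [Field F] {c c' y y' : F}
    (h : Projectivization.mk F ![c, y, 1] (vec3_ne_zero_last c y)
      = Projectivization.mk F ![c', y', 1] (vec3_ne_zero_last c' y')) : c = c' := by
  rw [Projectivization.mk_eq_mk_iff] at h
  obtain ⟨a, ha⟩ := h
  have h2 := congrFun ha 2
  have h0 := congrFun ha 0
  simp [Units.smul_def] at h2 h0
  rw [h2] at h0
  simpa using h0.symm

theorem statement2 (F : Type) [Field F] [Fintype F] (hq : 2 < Fintype.card F)
    (f : Polynomial F) (hdeg : f.natDegree < Fintype.card F) :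
    Function.Bijective (fun x : F => f.eval x) ↔
      ∀ W : Submodule F (Fin 3 → F), Module.finrank F W = 2 →
        (Projectivization.mk F ![1, 0, 0] vec3_e0_ne_zero).submodule ≤ W →
        {x ∈ Sf f | x.submodule ≤ W}.ncard ≤ 2 := by
  constructor
  · intro hbij W hW2 he0W
    have he0 : ![(1:F), 0, 0] ∈ W := by
      rw [Projectivization.submodule_mk, Submodule.span_singleton_le_iff_mem] at he0W
      exact he0W
    by_cases hz : ∃ w ∈ W, w 2 ≠ 0
    · obtain ⟨w, hwW, hw2⟩ := hz
      set b : F := (w 2)⁻¹ * w 1 with hb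
      have hvW : ![(0:F), b, 1] ∈ W := by
        have : ![(0:F), b, 1] = (w 2)⁻¹ • w - ((w 2)⁻¹ * w 0) • ![1, 0, 0] := by
          funext i; fin_cases i <;> simp [hb, inv_mul_cancel₀ hw2]
        rw [this]
        exact W.sub_mem (W.smul_mem _ hwW) (W.smul_mem _ he0)
      obtain ⟨c0, hc0⟩ := hbij.2 b
      simp only at hc0
      have hsub : {x ∈ Sf f | x.submodule ≤ W} ⊆
          {Projectivization.mk F ![1, 0, 0] vec3_e0_ne_zero,
           Projectivization.mk F ![c0, f.eval c0, 1] (vec3_ne_zero_last c0 (f.eval c0))} := by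
        rintro x ⟨hx, hxW⟩
        simp only [Sf, Set.mem_union, Set.mem_setOf_eq, Set.mem_insert_iff,
          Set.mem_singleton_iff] at hx
        rcases hx with ⟨c, rfl⟩ | rfl | rfl
        · rw [Projectivization.submodule_mk, Submodule.span_singleton_le_iff_mem] at hxW
          have h1 : ![(0:F), f.eval c - b, 0] ∈ W := by
            have : ![(0:F), f.eval c - b, 0]
                = (![c, f.eval c, 1] - c • ![1, 0, 0]) - ![0, b, 1] := by
              funext i; fin_cases i <;> simp
            rw [this]
            exact W.sub_mem (W.sub_mem hxW (W.smul_mem _ he0)) hvW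
          by_cases hfb : f.eval c = b
          · have hcc : c = c0 := hbij.1 (by simp [hc0, hfb])
            subst hcc
            exact Or.inr rfl
          · exfalso
            have he1 : ![(0:F), 1, 0] ∈ W := by
              have : ![(0:F), 1, 0] = (f.eval c - b)⁻¹ • ![(0:F), f.eval c - b, 0] := by
                funext i; fin_cases i <;> simp [inv_mul_cancel₀ (sub_ne_zero.2 hfb)]
              rw [this]
              exact W.smul_mem _ h1
            exact three_vecs_not_in W hW2 b he0 he1 hvW
        · exact Or.inl rfl
        · exfalso
          rw [Projectivization.submodule_mk, Submodule.span_singleton_le_iff_mem] at hxW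
          exact three_vecs_not_in W hW2 b he0 hxW hvW
      calc {x ∈ Sf f | x.submodule ≤ W}.ncard
          ≤ ({Projectivization.mk F ![1, 0, 0] vec3_e0_ne_zero,
              Projectivization.mk F ![c0, f.eval c0, 1]
                (vec3_ne_zero_last c0 (f.eval c0))} : Set _).ncard :=
            Set.ncard_le_ncard hsub (Set.toFinite _)
        _ ≤ 2 := le_trans (Set.ncard_insert_le _ _) (by simp)
    · push_neg at hz
      have hsub : {x ∈ Sf f | x.submodule ≤ W} ⊆
          {Projectivization.mk F ![1, 0, 0] vec3_e0_ne_zero,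
           Projectivization.mk F ![0, 1, 0] vec3_e1_ne_zero} := by
        rintro x ⟨hx, hxW⟩
        simp only [Sf, Set.mem_union, Set.mem_setOf_eq, Set.mem_insert_iff,
          Set.mem_singleton_iff] at hx
        rcases hx with ⟨c, rfl⟩ | rfl | rfl
        · exfalso
          rw [Projectivization.submodule_mk, Submodule.span_singleton_le_iff_mem] at hxW
          have := hz _ hxW
          simp at this
        · exact Or.inl rfl
        · exact Or.inr rfl
      calc {x ∈ Sf f | x.submodule ≤ W}.ncard
          ≤ ({Projectivization.mk F ![1, 0, 0] vec3_e0_ne_zero,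
              Projectivization.mk F ![0, 1, 0] vec3_e1_ne_zero} : Set _).ncard :=
            Set.ncard_le_ncard hsub (Set.toFinite _)
        _ ≤ 2 := le_trans (Set.ncard_insert_le _ _) (by simp)
  · intro h
    rw [← Finite.injective_iff_bijective]
    intro c1 c2 hf
    simp only at hf
    by_contra hne
    set b : F := f.eval c1 with hb
    have hli : LinearIndependent F ![![(1:F), 0, 0], ![0, b, 1]] := by
      rw [LinearIndependent.pair_iff' vec3_e0_ne_zero]
      intro a hcontra
      have := congrFun hcontra 2
      simp at this
    set W : Submodule F (Fin 3 → F) := Submodule.span F {![1, 0, 0], ![0, b, 1]} with hW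
    have hrange : ({![(1:F), 0, 0], ![0, b, 1]} : Set (Fin 3 → F))
        = Set.range ![![(1:F), 0, 0], ![0, b, 1]] := by
      simp [Matrix.range_cons, Matrix.range_empty]
      ext v; simp [or_comm]
    have hW2 : Module.finrank F W = 2 := by
      rw [hW, hrange, finrank_span_eq_card hli, Fintype.card_fin]
    have he0W : (Projectivization.mk F ![1, 0, 0] vec3_e0_ne_zero).submodule ≤ W := by
      rw [Projectivization.submodule_mk, Submodule.span_singleton_le_iff_mem]
      exact Submodule.subset_span (Set.mem_insert _ _)
    have hcard := h W hW2 he0W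
    have hmem1 : ![c1, f.eval c1, 1] ∈ W := by
      rw [hW, Submodule.mem_span_pair]
      exact ⟨c1, 1, by funext i; fin_cases i <;> simp [hb]⟩
    have hmem2 : ![c2, f.eval c2, 1] ∈ W := by
      rw [hW, Submodule.mem_span_pair]
      refine ⟨c2, 1, ?_⟩
      funext i; fin_cases i <;> simp [hb, ← hf]
    have hsub3 : ({Projectivization.mk F ![1, 0, 0] vec3_e0_ne_zero,
        Projectivization.mk F ![c1, f.eval c1, 1] (vec3_ne_zero_last c1 (f.eval c1)),
        Projectivization.mk F ![c2, f.eval c2, 1] (vec3_ne_zero_last c2 (f.eval c2))} : Set _)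
        ⊆ {x ∈ Sf f | x.submodule ≤ W} := by
      rintro x (rfl | rfl | rfl)
      · exact ⟨Or.inr (Or.inl rfl), he0W⟩
      · refine ⟨Or.inl ⟨c1, rfl⟩, ?_⟩
        rw [Projectivization.submodule_mk, Submodule.span_singleton_le_iff_mem]
        exact hmem1
      · refine ⟨Or.inl ⟨c2, rfl⟩, ?_⟩
        rw [Projectivization.submodule_mk, Submodule.span_singleton_le_iff_mem]
        exact hmem2
    have h3 : ({Projectivization.mk F ![1, 0, 0] vec3_e0_ne_zero,
        Projectivization.mk F ![c1, f.eval c1, 1] (vec3_ne_zero_last c1 (f.eval c1)),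
        Projectivization.mk F ![c2, f.eval c2, 1] (vec3_ne_zero_last c2 (f.eval c2))} : Set _).ncard
        = 3 := by
      refine Set.ncard_eq_three.2 ⟨_, _, _, ?_, ?_, ?_, rfl⟩
      · exact (mk_pt_ne_e0 c1 (f.eval c1)).symm
      · exact (mk_pt_ne_e0 c2 (f.eval c2)).symm
      · intro hcontra; exact hne (mk_pt_inj hcontra)
    have hfin : Finite (Projectivization F (Fin 3 → F)) := Quotient.finite _
    have hle := Set.ncard_le_ncard hsub3 (Set.toFinite _)
    rw [h3] at hle
    exact absurd (le_trans hle hcard) (by norm_num)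
end
end

section
/- Let q > 2 be a prime power and g(X) in F_q[X] a polynomial of degree less than q-1. If g is injective on F_q \ {0}, then g permutes F_q. -/
lemma sum_eval_eq_zero (F : Type) [Field F] [Fintype F] (g : Polynomial F)
    (hdeg : g.natDegree < Fintype.card F - 1) : ∑ x : F, g.eval x = 0 := by
  calc ∑ x : F, g.eval x
      = ∑ x : F, ∑ i ∈ Finset.range (g.natDegree + 1), g.coeff i * x ^ i := by
        refine Finset.sum_congr rfl fun x _ => ?_
        exact Polynomial.eval_eq_sum_range x
    _ = ∑ i ∈ Finset.range (g.natDegree + 1), ∑ x : F, g.coeff i * x ^ i :=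
        Finset.sum_comm
    _ = ∑ i ∈ Finset.range (g.natDegree + 1), g.coeff i * ∑ x : F, x ^ i := by
        simp [Finset.mul_sum]
    _ = 0 := by
        refine Finset.sum_eq_zero fun i hi => ?_
        rw [FiniteField.sum_pow_lt_card_sub_one F i (by
          have := Finset.mem_range.mp hi; omega), mul_zero]

theorem statement4 (F : Type) [Field F] [Fintype F] (hq : 2 < Fintype.card F)
    (g : Polynomial F) (hdeg : g.natDegree < Fintype.card F - 1)
    (hinj : Set.InjOn (fun x : F => g.eval x) {x : F | x ≠ 0}) :
    Function.Bijective fun x : F => g.eval x := by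
  classical
  rw [← Finite.injective_iff_bijective]
  have key : ∀ a : F, a ≠ 0 → g.eval a ≠ g.eval 0 := by
    intro a ha h
    set S : Finset F := Finset.image (fun x => g.eval x) (Finset.univ.erase 0) with hS
    have hinj' : ∀ x ∈ Finset.univ.erase 0, ∀ y ∈ Finset.univ.erase 0,
        g.eval x = g.eval y → x = y := by
      intro x hx y hy hxy
      exact hinj (Finset.mem_erase.mp hx).1 (Finset.mem_erase.mp hy).1 hxy
    have hcard : S.card = Fintype.card F - 1 := by
      rw [hS, Finset.card_image_of_injOn hinj',
        Finset.card_erase_of_mem (Finset.mem_univ 0), Finset.card_univ]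
    have hcardc : Sᶜ.card = 1 := by
      rw [Finset.card_compl, hcard]; omega
    obtain ⟨m, hm⟩ := Finset.card_eq_one.mp hcardc
    have hX : ∑ y : F, y = 0 := by
      have := sum_eval_eq_zero F Polynomial.X
        (by rw [Polynomial.natDegree_X]; omega)
      simpa using this
    have hsplit : ∑ y ∈ S, y + ∑ y ∈ Sᶜ, y = 0 := by
      rw [Finset.sum_add_sum_compl]; exact hX
    have hsumS : ∑ y ∈ S, y = -m := by
      rw [hm, Finset.sum_singleton] at hsplit
      exact eq_neg_of_add_eq_zero_left hsplit
    have htot : ∑ x : F, g.eval x = 0 := sum_eval_eq_zero F g hdeg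
    have hsplit2 : g.eval 0 + ∑ x ∈ Finset.univ.erase 0, g.eval x = 0 := by
      rw [Finset.add_sum_erase Finset.univ (fun x => g.eval x) (Finset.mem_univ (0 : F))]
      exact htot
    have himg : ∑ x ∈ Finset.univ.erase 0, g.eval x = ∑ y ∈ S, y := by
      rw [hS, Finset.sum_image hinj']
    have hm0 : m = g.eval 0 := by
      rw [himg, hsumS, add_neg_eq_zero] at hsplit2
      exact hsplit2.symm
    have hmem : g.eval a ∈ S := Finset.mem_image.mpr
      ⟨a, Finset.mem_erase.mpr ⟨ha, Finset.mem_univ a⟩, rfl⟩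
    have hmc : m ∈ Sᶜ := by rw [hm]; exact Finset.mem_singleton_self m
    rw [Finset.mem_compl] at hmc
    exact hmc (hm0 ▸ h ▸ hmem)
  intro a b hab
  simp only at hab
  rcases eq_or_ne a 0 with rfl | ha
  · rcases eq_or_ne b 0 with rfl | hb
    · rfl
    · exact absurd hab.symm (key b hb)
  · rcases eq_or_ne b 0 with rfl | hb
    · exact absurd hab (key a ha)
    · exact hinj ha hb hab
end

section
/- Let K be a field and f(X) in K[X] a monic odd polynomial (i.e., f(X) lies in X·K[X^2]). If f(X) = g(h(X)) for g, h in K[X] with char(K) not dividing deg(g), then there exists a degree-one polynomial ρ(X) in K[X] such that both g(ρ(X)) and ρ^{-1}(h(X)) are monic polynomials in X·K[X^2]. -/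
/-!
Let `n = deg g` and `m = deg h`; both are odd since `nm = deg f` is. Split `h = e + o` into its even
and odd parts. If `e` had positive degree `d`, then `d < m` and the coefficient of `X^(d + (n-1)m)`
(an even exponent) in `f = g ∘ h` would be `lc(g) · n · lc(e) · lc(h)^(n-1) ≠ 0`: below `deg g`
the powers of `h` are too short to reach it, and in `(e + o)^n` the term `o^n` is odd while the
terms with at least two factors `e` have smaller degree. So `h - h(0) = o` is odd, and `ρ = aX + b`
with `a = lc(h)`, `b = h(0)` makes `ρ⁻¹ ∘ h = a⁻¹ o` monic and odd. Finally
`f = (g ∘ ρ) ∘ (ρ⁻¹ ∘ h)` forces `g ∘ ρ` to be odd: composing its even part with an odd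
polynomial gives a polynomial that is both even and odd, hence zero.
-/

/-- A polynomial is "odd", i.e. lies in `X·K[X²]`, iff all of its terms have odd degree. -/
def OddPoly {K : Type} [Field K] (p : Polynomial K) : Prop :=
  ∀ n : ℕ, Even n → p.coeff n = 0

open Polynomial Finset

namespace Polynomial

section Semiring

variable {R : Type*} [Semiring R] {p q : R[X]} {a b : ZMod 2}

variable (R) in
def parityGrade (e : ZMod 2) : Submodule R R[X] where
  carrier := {p | ∀ n : ℕ, (n : ZMod 2) ≠ e → p.coeff n = 0}
  add_mem' hp hq n hn := by rw [coeff_add, hp n hn, hq n hn, add_zero]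
  zero_mem' n _ := coeff_zero n
  smul_mem' c p hp n hn := by rw [coeff_smul, hp n hn, smul_zero]

theorem mem_parityGrade :
    p ∈ parityGrade R a ↔ ∀ n : ℕ, (n : ZMod 2) ≠ a → p.coeff n = 0 :=
  Iff.rfl

theorem C_mem_parityGrade_zero (c : R) : C c ∈ parityGrade R 0 := fun n hn => by
  rw [coeff_C, if_neg (by rintro rfl; exact hn Nat.cast_zero)]

theorem mul_mem_parityGrade (hp : p ∈ parityGrade R a) (hq : q ∈ parityGrade R b) :
    p * q ∈ parityGrade R (a + b) := fun n hn => by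
  rw [coeff_mul]
  refine sum_eq_zero fun ⟨i, j⟩ hij => ?_
  rw [HasAntidiagonal.mem_antidiagonal] at hij
  by_cases hi : (i : ZMod 2) = a
  · rw [hq j fun hj => hn (by rw [← hij, Nat.cast_add, hi, hj]), mul_zero]
  · rw [hp i hi, zero_mul]

theorem pow_mem_parityGrade (hp : p ∈ parityGrade R a) (k : ℕ) :
    p ^ k ∈ parityGrade R (k * a) := by
  induction k with
  | zero => simpa using C_mem_parityGrade_zero (1 : R)
  | succ k ih => simpa [pow_succ, add_mul] using mul_mem_parityGrade ih hp

theorem comp_mem_parityGrade (hp : p ∈ parityGrade R a) (hq : q ∈ parityGrade R 1) :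
    p.comp q ∈ parityGrade R a := by
  rw [comp_eq_sum_left, Polynomial.sum_def]
  refine Submodule.sum_mem _ fun i hi => ?_
  have hia : (i : ZMod 2) = a := by_contra fun h => mem_support_iff.1 hi (hp i h)
  simpa [hia] using
    mul_mem_parityGrade (C_mem_parityGrade_zero (p.coeff i)) (pow_mem_parityGrade hq i)

theorem eq_zero_of_mem_parityGrade (ha : p ∈ parityGrade R a) (hb : p ∈ parityGrade R b)
    (hab : a ≠ b) : p = 0 := ext fun n => by
  by_cases hn : (n : ZMod 2) = a
  · exact hb n (hn ▸ hab)
  · exact ha n hn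

theorem natDegree_cast_of_mem_parityGrade (hp : p ∈ parityGrade R a) (hp0 : p ≠ 0) :
    (p.natDegree : ZMod 2) = a :=
  by_contra fun h => hp0 (leadingCoeff_eq_zero.1 (hp _ h))

theorem even_natDegree_of_mem_parityGrade_zero (hp : p ∈ parityGrade R 0) : Even p.natDegree := by
  rcases eq_or_ne p 0 with rfl | hp0
  · simp
  · exact ZMod.natCast_eq_zero_iff_even.1 (natDegree_cast_of_mem_parityGrade hp hp0)

theorem odd_natDegree_of_mem_parityGrade_one (hp : p ∈ parityGrade R 1) (hp0 : p ≠ 0) :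
    Odd p.natDegree :=
  ZMod.natCast_eq_one_iff_odd.1 (natDegree_cast_of_mem_parityGrade hp hp0)

noncomputable def parityPart (p : R[X]) (e : ZMod 2) : R[X] :=
  ∑ n ∈ p.support.filter (fun n : ℕ => (n : ZMod 2) = e), monomial n (p.coeff n)

theorem coeff_parityPart (p : R[X]) (e : ZMod 2) (n : ℕ) :
    (p.parityPart e).coeff n = if (n : ZMod 2) = e then p.coeff n else 0 := by
  simp only [parityPart, finsetSum_coeff, coeff_monomial]
  by_cases hn : (n : ZMod 2) = e <;> by_cases h0 : p.coeff n = 0 <;> simp [hn, h0]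

theorem natDegree_parityPart_le (p : R[X]) (e : ZMod 2) :
    (p.parityPart e).natDegree ≤ p.natDegree :=
  natDegree_le_iff_coeff_eq_zero.2 fun n hn => by
    rw [coeff_parityPart, coeff_eq_zero_of_natDegree_lt hn, ite_self]

theorem parityPart_mem_parityGrade (p : R[X]) (e : ZMod 2) : p.parityPart e ∈ parityGrade R e :=
  fun n hn => by rw [coeff_parityPart, if_neg hn]

theorem parityPart_zero_add_parityPart_one (p : R[X]) : p.parityPart 0 + p.parityPart 1 = p := by
  ext n
  rw [coeff_add, coeff_parityPart, coeff_parityPart]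
  rcases Nat.even_or_odd n with h | h
  · simp [ZMod.natCast_eq_zero_iff_even.2 h]
  · simp [ZMod.natCast_eq_one_iff_odd.2 h]

theorem coeff_comp_eq_leadingCoeff_mul_of_lt {g h : R[X]} {D : ℕ}
    (hD : (g.natDegree - 1) * h.natDegree < D) :
    (g.comp h).coeff D = g.leadingCoeff * (h ^ g.natDegree).coeff D := by
  rw [comp_eq_sum_left, Polynomial.sum_def, finsetSum_coeff]
  simp only [coeff_C_mul]
  refine sum_eq_single _ (fun i hi hin => ?_) fun hg => by
    rw [notMem_support_iff.1 hg, zero_mul]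
  have hi : i ≤ g.natDegree - 1 := by have := le_natDegree_of_mem_supp i hi; omega
  rw [coeff_eq_zero_of_natDegree_lt
    (natDegree_pow_le.trans_lt ((Nat.mul_le_mul_right _ hi).trans_lt hD)), mul_zero]

end Semiring

section CommSemiring

variable {R : Type*} [CommSemiring R] [NoZeroDivisors R]

theorem coeff_add_pow_of_natDegree_lt {e o : R[X]} (hlt : e.natDegree < o.natDegree) {n : ℕ}
    (hn : 0 < n) :
    ((e + o) ^ n).coeff (e.natDegree + (n - 1) * o.natDegree) =
      (o ^ n).coeff (e.natDegree + (n - 1) * o.natDegree) +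
        n * (e.leadingCoeff * o.leadingCoeff ^ (n - 1)) := by
  obtain ⟨k, rfl⟩ : ∃ k, n = k + 1 := ⟨n - 1, by omega⟩
  set d := e.natDegree
  set m := o.natDegree
  have hhigh : ∀ i ∈ range k,
      (e ^ (i + 1 + 1) * o ^ (k + 1 - (i + 1 + 1)) * ((k + 1).choose (i + 1 + 1) : R[X])).coeff
        (d + k * m) = 0 := fun i hi => by
    obtain ⟨r, rfl⟩ := Nat.exists_eq_add_of_lt (mem_range.1 hi)
    have hr : i + r + 1 + 1 - (i + 1 + 1) = r := by omega
    have hdeg : (i + 1 + 1) * d + r * m < d + (i + r + 1) * m := by nlinarith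
    rw [hr, ← C_eq_natCast, coeff_mul_C, coeff_eq_zero_of_natDegree_lt, zero_mul]
    exact natDegree_mul_le.trans_lt
      ((add_le_add natDegree_pow_le natDegree_pow_le).trans_lt hdeg)
  rw [Nat.add_sub_cancel, add_pow, finsetSum_coeff, sum_range_succ', sum_range_succ',
    sum_eq_zero hhigh, zero_add]
  simp only [zero_add, pow_one, pow_zero, one_mul, Nat.add_sub_cancel, Nat.sub_zero,
    Nat.choose_one_right, Nat.choose_zero_right, Nat.cast_one, mul_one]
  rw [← C_eq_natCast, coeff_mul_C, ← natDegree_pow, coeff_mul_degree_add_degree,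
    leadingCoeff_pow]
  ring

end CommSemiring

section Ring

variable {R : Type*} [Ring R] [NoZeroDivisors R]

theorem mem_parityGrade_one_of_comp {g H : R[X]} (hgH : g.comp H ∈ parityGrade R 1)
    (hH : H ∈ parityGrade R 1) (hH0 : 0 < H.natDegree) : g ∈ parityGrade R 1 := by
  have hsplit := parityPart_zero_add_parityPart_one g
  have hodd := comp_mem_parityGrade (parityPart_mem_parityGrade g 1) hH
  have heven := comp_mem_parityGrade (parityPart_mem_parityGrade g 0) hH
  have hdiff : (g.parityPart 0).comp H = g.comp H - (g.parityPart 1).comp H := by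
    rw [eq_sub_iff_add_eq, ← add_comp, hsplit]
  have hzero : (g.parityPart 0).comp H = 0 :=
    eq_zero_of_mem_parityGrade heven (hdiff ▸ sub_mem hgH hodd) zero_ne_one
  obtain hg0 | ⟨-, hHC⟩ := comp_eq_zero_iff.1 hzero
  · rw [← hsplit, hg0, zero_add]
    exact parityPart_mem_parityGrade g 1
  · exact absurd (hHC ▸ natDegree_C _) hH0.ne'

theorem Monic.comp_C_leadingCoeff_mul_X_add_C {g h : R[X]} (hgh : (g.comp h).Monic)
    (hh : 0 < h.natDegree) (b : R) : (g.comp (C h.leadingCoeff * X + C b)).Monic := by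
  have ha : h.leadingCoeff ≠ 0 := leadingCoeff_ne_zero.2 (ne_zero_of_natDegree_gt hh)
  rw [Monic, leadingCoeff_comp (by rw [natDegree_linear ha]; exact one_ne_zero),
    leadingCoeff_linear ha, ← leadingCoeff_comp hh.ne']
  exact hgh

end Ring

section Domain

variable {R : Type*} [CommRing R] [IsDomain R]

theorem natDegree_parityPart_zero_eq_zero_of_comp {g h : R[X]}
    (hgh : g.comp h ∈ parityGrade R 1) (hg : Odd g.natDegree) (hh : Odd h.natDegree)
    (hchar : (g.natDegree : R) ≠ 0) : (h.parityPart 0).natDegree = 0 := by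
  set e := h.parityPart 0
  set o := h.parityPart 1
  have he : e ∈ parityGrade R 0 := parityPart_mem_parityGrade h 0
  have hsplit : e + o = h := parityPart_zero_add_parityPart_one h
  by_contra hd
  have hdm : e.natDegree < h.natDegree := by
    have hne : e.natDegree ≠ h.natDegree := fun heq =>
      Nat.not_even_iff_odd.2 hh (heq ▸ even_natDegree_of_mem_parityGrade_zero he)
    exact (natDegree_parityPart_le h 0).lt_of_ne hne
  have hoh : o = h - e := eq_sub_of_add_eq' hsplit
  have hom : o.natDegree = h.natDegree := hoh ▸ natDegree_sub_eq_left_of_natDegree_lt hdm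
  have holc : o.leadingCoeff = h.leadingCoeff :=
    hoh ▸ leadingCoeff_sub_of_degree_lt (degree_lt_degree hdm)
  have hD : ((e.natDegree + (g.natDegree - 1) * h.natDegree : ℕ) : ZMod 2) ≠ 1 := by
    rw [Ne, ZMod.natCast_eq_one_iff_odd, Nat.not_odd_iff_even]
    exact (even_natDegree_of_mem_parityGrade_zero he).add
      ((Nat.Odd.sub_odd hg odd_one).mul_right _)
  have hon : o ^ g.natDegree ∈ parityGrade R 1 := by
    simpa [hg.natCast_zmod_two] using
      pow_mem_parityGrade (parityPart_mem_parityGrade h 1) g.natDegree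
  have hcoeff : (g.comp h).coeff (e.natDegree + (g.natDegree - 1) * h.natDegree) =
      g.leadingCoeff * (g.natDegree * (e.leadingCoeff * h.leadingCoeff ^ (g.natDegree - 1))) := by
    rw [coeff_comp_eq_leadingCoeff_mul_of_lt (by omega), ← hom, ← holc, ← hsplit,
      coeff_add_pow_of_natDegree_lt (hom ▸ hdm) hg.pos, hon _ (hom ▸ hD), zero_add]
  have hg0 : g ≠ 0 := ne_zero_of_natDegree_gt hg.pos
  have he0 : e ≠ 0 := ne_zero_of_natDegree_gt (Nat.pos_of_ne_zero hd)
  have hh0 : h ≠ 0 := ne_zero_of_natDegree_gt hh.pos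
  exact mul_ne_zero (leadingCoeff_ne_zero.2 hg0) (mul_ne_zero hchar (mul_ne_zero
    (leadingCoeff_ne_zero.2 he0) (pow_ne_zero _ (leadingCoeff_ne_zero.2 hh0))))
    (hcoeff.symm.trans (hgh _ hD))

theorem sub_C_mem_parityGrade_one_of_comp {g h : R[X]} (hgh : g.comp h ∈ parityGrade R 1)
    (hg : Odd g.natDegree) (hh : Odd h.natDegree) (hchar : (g.natDegree : R) ≠ 0) :
    h - C (h.coeff 0) ∈ parityGrade R 1 := by
  have he :=
    eq_C_of_natDegree_eq_zero (natDegree_parityPart_zero_eq_zero_of_comp hgh hg hh hchar)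
  rw [coeff_parityPart, if_pos Nat.cast_zero] at he
  rw [← he, ← eq_sub_of_add_eq' (parityPart_zero_add_parityPart_one h)]
  exact parityPart_mem_parityGrade h 1

end Domain

section Field

variable {K : Type*} [Field K] {a : K}

theorem C_mul_X_add_C_comp_C_inv_mul_X_sub_C (ha : a ≠ 0) (b : K) :
    (C a * X + C b).comp (C a⁻¹ * (X - C b)) = X := by
  rw [add_comp, mul_comp, C_comp, C_comp, X_comp, ← mul_assoc, ← C_mul, mul_inv_cancel₀ ha, C_1,
    one_mul, sub_add_cancel]

theorem C_inv_mul_X_sub_C_comp_C_mul_X_add_C (ha : a ≠ 0) (b : K) :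
    (C a⁻¹ * (X - C b)).comp (C a * X + C b) = X := by
  rw [mul_comp, sub_comp, C_comp, C_comp, X_comp, add_sub_cancel_right, ← mul_assoc, ← C_mul,
    inv_mul_cancel₀ ha, C_1, one_mul]

theorem C_inv_mul_X_sub_C_comp (a b : K) (h : K[X]) :
    (C a⁻¹ * (X - C b)).comp h = C a⁻¹ * (h - C b) := by
  rw [mul_comp, sub_comp, C_comp, C_comp, X_comp]

theorem monic_C_inv_leadingCoeff_mul_X_sub_C_comp {h : K[X]} (hh : 0 < h.natDegree) (b : K) :
    ((C h.leadingCoeff⁻¹ * (X - C b)).comp h).Monic := by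
  refine C_inv_mul_X_sub_C_comp _ b h ▸ monic_C_mul_of_mul_leadingCoeff_eq_one ?_
  rw [leadingCoeff_sub_of_degree_lt (degree_C_le.trans_lt (natDegree_pos_iff_degree_pos.1 hh))]
  exact inv_mul_cancel₀ (leadingCoeff_ne_zero.2 (ne_zero_of_natDegree_gt hh))

end Field

end Polynomial

theorem oddPoly_iff_mem_parityGrade_one {K : Type} [Field K] {p : K[X]} :
    OddPoly p ↔ p ∈ parityGrade K 1 := by
  rw [mem_parityGrade]
  exact forall_congr' fun n => by rw [Ne, ZMod.natCast_eq_one_iff_odd, Nat.not_odd_iff_even]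

theorem statement5 (K : Type) [Field K] (f g h : Polynomial K)
    (hmonic : f.Monic) (hodd : OddPoly f) (hcomp : f = g.comp h)
    (hchar : ¬ (ringChar K ∣ g.natDegree)) :
    ∃ ρ σ : Polynomial K, ρ.degree = 1 ∧ σ.degree = 1 ∧
      ρ.comp σ = Polynomial.X ∧ σ.comp ρ = Polynomial.X ∧
      (g.comp ρ).Monic ∧ OddPoly (g.comp ρ) ∧
      (σ.comp h).Monic ∧ OddPoly (σ.comp h) := by
  rw [oddPoly_iff_mem_parityGrade_one] at hodd
  obtain ⟨hg, hh⟩ : Odd g.natDegree ∧ Odd h.natDegree := by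
    rw [← Nat.odd_mul, ← natDegree_comp, ← hcomp]
    exact odd_natDegree_of_mem_parityGrade_one hodd hmonic.ne_zero
  have hchar' : (g.natDegree : K) ≠ 0 := fun h0 => hchar ((ringChar.spec K _).1 h0)
  have ha : h.leadingCoeff ≠ 0 := leadingCoeff_ne_zero.2 (ne_zero_of_natDegree_gt hh.pos)
  set ρ := C h.leadingCoeff * X + C (h.coeff 0)
  set σ := C h.leadingCoeff⁻¹ * (X - C (h.coeff 0))
  have hσh_monic : (σ.comp h).Monic := monic_C_inv_leadingCoeff_mul_X_sub_C_comp hh.pos _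
  have hσh_odd : σ.comp h ∈ parityGrade K 1 := by
    rw [C_inv_mul_X_sub_C_comp, ← smul_eq_C_mul]
    exact Submodule.smul_mem _ _ (sub_C_mem_parityGrade_one_of_comp (hcomp ▸ hodd) hg hh hchar')
  have hfactor : (g.comp ρ).comp (σ.comp h) = f := by
    rw [comp_assoc, ← comp_assoc ρ, C_mul_X_add_C_comp_C_inv_mul_X_sub_C ha, X_comp, hcomp]
  have hgρ_odd : g.comp ρ ∈ parityGrade K 1 := mem_parityGrade_one_of_comp (hfactor ▸ hodd)
    hσh_odd (odd_natDegree_of_mem_parityGrade_one hσh_odd hσh_monic.ne_zero).pos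
  refine ⟨ρ, σ, degree_linear ha, ?_, C_mul_X_add_C_comp_C_inv_mul_X_sub_C ha _,
    C_inv_mul_X_sub_C_comp_C_mul_X_add_C ha _, (hcomp ▸ hmonic).comp_C_leadingCoeff_mul_X_add_C
    hh.pos _, oddPoly_iff_mem_parityGrade_one.2 hgρ_odd, hσh_monic,
    oddPoly_iff_mem_parityGrade_one.2 hσh_odd⟩
  rw [degree_C_mul (inv_ne_zero ha), degree_X_sub_C]
end

section
/- Let a be a nonzero element of the algebraic closure of F_2, and let n > 1 be an odd integer. Then 0 is the unique critical value of f(X) := D_n(X, a): every root c of f'(X) satisfies f(c) = 0. Moreover 0 is a simple root of f(X) and every other root of f(X) has multiplicity exactly 2. -/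
/-!
In characteristic 2 the Dickson polynomial `f = D_n(X, a)` of odd degree `n` involves only odd
powers of `X`, so `X f' = f`. Hence every critical point is a root, `0` is a root, and every
nonzero root is also a root of `f'`, i.e. has multiplicity at least 2. Writing `a = b²`,
`n = 2m + 1` and taking a primitive `n`-th root of unity `ζ`, the identity
`D_n(y + z, yz) = yⁿ + zⁿ` shows that the `m` distinct nonzero points `b (ζⁱ + ζ⁻ⁱ)`,
`1 ≤ i ≤ m`, are roots of `f`. Since `1 + 2m = n = deg f`, these multiplicities are exact and
there are no other roots.
-/

open Polynomial

namespace Polynomial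

section CommRing

variable {R : Type*} [CommRing R]

theorem dickson_one_eval_add (x y : R) :
    ∀ n, (dickson 1 (x * y) n).eval (x + y) = x ^ n + y ^ n
  | 0 => by simp only [pow_zero, dickson_zero]; norm_num
  | 1 => by simp only [eval_X, dickson_one, pow_one]
  | n + 2 => by
    simp only [eval_sub, eval_mul, dickson_one_eval_add x y _, eval_X, dickson_add_two, eval_C]
    ring

variable (k : ℕ) (a : R)

theorem natDegree_dickson_le : ∀ n, (dickson k a n).natDegree ≤ n
  | 0 => by rw [dickson_zero, ← C_eq_natCast, ← C_ofNat, ← C_sub, natDegree_C]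
  | 1 => by rw [dickson_one]; exact natDegree_X_le
  | n + 2 => by
    rw [dickson_add_two]
    have h1 := natDegree_dickson_le (n + 1)
    have h0 := natDegree_dickson_le n
    refine (natDegree_sub_le _ _).trans (max_le ?_ ?_)
    · exact natDegree_mul_le.trans (by have := natDegree_X_le (R := R); omega)
    · exact (natDegree_C_mul_le a _).trans (by omega)

theorem coeff_dickson_self : ∀ n, (dickson k a (n + 1)).coeff (n + 1) = 1
  | 0 => by rw [dickson_one, coeff_X_one]
  | n + 1 => by
    rw [dickson_add_two, coeff_sub, coeff_X_mul, coeff_dickson_self n, coeff_C_mul,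
      coeff_eq_zero_of_natDegree_lt ((natDegree_dickson_le k a n).trans_lt (by omega)), mul_zero,
      sub_zero]

theorem monic_dickson (n : ℕ) : (dickson k a (n + 1)).Monic :=
  monic_of_natDegree_le_of_coeff_eq_one _ (natDegree_dickson_le k a _) (coeff_dickson_self k a n)

end CommRing

section CharTwo

variable {R : Type*} [CommRing R] [CharP R 2] (k : ℕ) (a : R)

theorem X_mul_derivative_dickson_of_odd {n : ℕ} (hn : Odd n) :
    X * derivative (dickson k a n) = dickson k a n := by
  have key : ∀ j, derivative (dickson k a (2 * j)) = 0 ∧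
      X * derivative (dickson k a (2 * j + 1)) = dickson k a (2 * j + 1) := by
    intro j
    induction j with
    | zero => simp [dickson_zero, dickson_one]
    | succ j ih =>
      have heven : derivative (dickson k a (2 * (j + 1))) = 0 := by
        rw [show 2 * (j + 1) = 2 * j + 2 by ring, dickson_add_two, derivative_sub,
          derivative_mul, derivative_X, one_mul, ih.2, derivative_C_mul, ih.1, mul_zero,
          sub_zero, CharTwo.add_self_eq_zero]
      refine ⟨heven, ?_⟩
      rw [show 2 * (j + 1) + 1 = (2 * j + 1) + 2 by ring, dickson_add_two, derivative_sub,
        derivative_mul, derivative_X, one_mul, show 2 * j + 1 + 1 = 2 * (j + 1) by ring, heven,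
        mul_zero, add_zero, derivative_C_mul, mul_sub, mul_left_comm, ih.2]
  obtain ⟨j, rfl⟩ := hn
  exact (key j).2

end CharTwo

section Field

variable {K : Type*} [Field K]

theorem dickson_one_isRoot_mul_add_inv [CharP K 2] {n : ℕ} (b : K) {u : K} (hu0 : u ≠ 0)
    (hu : u ^ n = 1) :
    (dickson 1 (b * b) n).IsRoot (b * (u + u⁻¹)) := by
  have := dickson_one_eval_add (b * u) (b * u⁻¹) n
  rw [mul_mul_mul_comm, mul_inv_cancel₀ hu0, mul_one, ← mul_add] at this
  rw [IsRoot, this, mul_pow, mul_pow, inv_pow, hu, inv_one, CharTwo.add_self_eq_zero]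

theorem eq_or_mul_eq_one_of_add_inv_eq {u v : K} (hu : u ≠ 0) (hv : v ≠ 0)
    (h : u + u⁻¹ = v + v⁻¹) : u = v ∨ u * v = 1 := by
  have : (u - v) * (u * v - 1) = 0 := by
    field_simp at h
    linear_combination h
  simpa only [mul_eq_zero, sub_eq_zero] using this

theorem IsPrimitiveRoot.eq_of_pow_add_inv_eq {ζ : K} {n i j : ℕ} (hζ : IsPrimitiveRoot ζ n)
    (hij : i + j < n) (h : ζ ^ i + (ζ ^ i)⁻¹ = ζ ^ j + (ζ ^ j)⁻¹) : i = j := by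
  have hζ0 : ζ ≠ 0 := hζ.ne_zero (by omega)
  rcases eq_or_mul_eq_one_of_add_inv_eq (pow_ne_zero i hζ0) (pow_ne_zero j hζ0) h with h | h
  · exact hζ.pow_inj (by omega) (by omega) h
  · rw [← pow_add] at h
    have := Nat.eq_zero_of_dvd_of_lt (hζ.dvd_of_pow_eq_one _ h) hij
    omega

theorem exists_finset_nonzero_isRoot_dickson [CharP K 2] {b ζ : K} {m : ℕ} (hb : b ≠ 0)
    (hζ : IsPrimitiveRoot ζ (2 * m + 1)) :
    ∃ S : Finset K, S.card = m ∧ ∀ c ∈ S, c ≠ 0 ∧ (dickson 1 (b * b) (2 * m + 1)).IsRoot c := by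
  classical
  set x : ℕ → K := fun i ↦ b * (ζ ^ i + (ζ ^ i)⁻¹)
  have hx_inj {i j : ℕ} (hij : i + j < 2 * m + 1) (h : x i = x j) : i = j :=
    hζ.eq_of_pow_add_inv_eq hij (mul_left_cancel₀ hb h)
  -- `x 0 = 1 + 1 = 0`, so injectivity also keeps the points `x i`, `i ≥ 1`, away from `0`.
  have hx0 : x 0 = 0 := by simp [x, CharTwo.add_self_eq_zero]
  refine ⟨(Finset.Icc 1 m).image x, ?_, ?_⟩
  · rw [Finset.card_image_of_injOn, Nat.card_Icc, Nat.add_sub_cancel]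
    intro i hi j hj h
    simp only [Finset.coe_Icc, Set.mem_Icc] at hi hj
    exact hx_inj (by omega) h
  · simp only [Finset.mem_image, Finset.mem_Icc]
    rintro _ ⟨i, hi, rfl⟩
    refine ⟨fun h ↦ ?_, ?_⟩
    · have := hx_inj (by omega) (h.trans hx0.symm)
      omega
    · exact dickson_one_isRoot_mul_add_inv b (pow_ne_zero i (hζ.ne_zero (by omega)))
        (by rw [← pow_mul, mul_comm, pow_mul, hζ.pow_eq_one, one_pow])

end Field

section IsDomain

variable {R : Type*} [CommRing R] [IsDomain R]

theorem one_lt_rootMultiplicity_of_X_mul_derivative_eq {f : R[X]} (hf : f ≠ 0)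
    (hXf : X * derivative f = f) {c : R} (hc : c ≠ 0) (hroot : f.IsRoot c) :
    1 < f.rootMultiplicity c := by
  refine (one_lt_rootMultiplicity_iff_isRoot hf).mpr ⟨hroot, ?_⟩
  rw [← hXf, IsRoot, eval_mul, eval_X] at hroot
  exact (mul_eq_zero.mp hroot).resolve_left hc

theorem roots_eq_of_count_le_rootMultiplicity [DecidableEq R] {p : R[X]} {T : Multiset R}
    (hT : ∀ c, T.count c ≤ p.rootMultiplicity c) (hcard : p.natDegree ≤ Multiset.card T) :
    p.roots = T :=
  (Multiset.eq_of_le_of_card_le (Multiset.le_iff_count.mpr fun c ↦ (count_roots p).symm ▸ hT c)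
    (p.card_roots'.trans hcard)).symm

theorem roots_dickson_eq_cons_zero [CharP R 2] [DecidableEq R] {a : R} {m : ℕ} {S : Finset R}
    (hS : S.card = m) (hSroots : ∀ c ∈ S, c ≠ 0 ∧ (dickson 1 a (2 * m + 1)).IsRoot c) :
    (dickson 1 a (2 * m + 1)).roots = 0 ::ₘ (S.val + S.val) := by
  set f := dickson 1 a (2 * m + 1)
  have hf : f ≠ 0 := (monic_dickson 1 a (2 * m)).ne_zero
  have hXf : X * derivative f = f := X_mul_derivative_dickson_of_odd 1 a (odd_two_mul_add_one m)
  refine roots_eq_of_count_le_rootMultiplicity (fun c ↦ ?_) ?_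
  · rcases eq_or_ne c 0 with rfl | hc
    · have h0S : (0 : R) ∉ S.val := fun h ↦ (hSroots 0 h).1 rfl
      have hf0 : f.IsRoot 0 := by rw [IsRoot, ← hXf, eval_mul, eval_X, zero_mul]
      rw [Multiset.count_cons_self, Multiset.count_eq_zero_of_notMem (by simpa using h0S)]
      exact (rootMultiplicity_pos hf).mpr hf0
    · rw [Multiset.count_cons_of_ne hc, Multiset.count_add]
      by_cases hcS : c ∈ S
      · rw [Multiset.count_eq_one_of_mem S.nodup hcS]
        exact one_lt_rootMultiplicity_of_X_mul_derivative_eq hf hXf hc (hSroots c hcS).2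
      · simp [Multiset.count_eq_zero_of_notMem, hcS]
  · exact (natDegree_dickson_le 1 a (2 * m + 1)).trans_eq (by simp [hS]; ring)

end IsDomain

end Polynomial

theorem statement9_general (a : AlgebraicClosure (ZMod 2)) (ha : a ≠ 0)
    (n : ℕ) (hodd : Odd n) :
    (∀ c : AlgebraicClosure (ZMod 2),
        (Polynomial.dickson 1 a n).derivative.eval c = 0 →
        (Polynomial.dickson 1 a n).eval c = 0) ∧
    (Polynomial.dickson 1 a n).rootMultiplicity 0 = 1 ∧
    (∀ c : AlgebraicClosure (ZMod 2), c ≠ 0 →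
        (Polynomial.dickson 1 a n).eval c = 0 →
        (Polynomial.dickson 1 a n).rootMultiplicity c = 2) := by
  classical
  have hXf : X * derivative (dickson 1 a n) = dickson 1 a n :=
    X_mul_derivative_dickson_of_odd 1 a hodd
  obtain ⟨m, rfl⟩ := hodd
  obtain ⟨b, rfl⟩ := IsAlgClosed.exists_eq_mul_self a
  have : NeZero ((2 * m + 1 : ℕ) : AlgebraicClosure (ZMod 2)) := ⟨by simp [CharTwo.two_eq_zero]⟩
  obtain ⟨ζ, hζ⟩ :=
    HasEnoughRootsOfUnity.exists_primitiveRoot (AlgebraicClosure (ZMod 2)) (2 * m + 1)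
  obtain ⟨S, hS, hSroots⟩ := exists_finset_nonzero_isRoot_dickson (left_ne_zero_of_mul ha) hζ
  have hroots := roots_dickson_eq_cons_zero hS hSroots
  have h0S : 0 ∉ S := fun h ↦ (hSroots 0 h).1 rfl
  refine ⟨fun c hc ↦ by rw [← hXf, eval_mul, hc, mul_zero], ?_, fun c hc hfc ↦ ?_⟩
  · rw [← count_roots, hroots]
    simp [h0S]
  · have hcS : c ∈ S := by
      simpa [hroots, hc] using (mem_roots (monic_dickson 1 _ (2 * m)).ne_zero).mpr hfc
    rw [← count_roots, hroots]
    simp [hc, Multiset.count_eq_one_of_mem S.nodup hcS]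

theorem statement9 (a : AlgebraicClosure (ZMod 2)) (ha : a ≠ 0)
    (n : ℕ) (hn : 1 < n) (hodd : Odd n) :
    (∀ c : AlgebraicClosure (ZMod 2),
        (Polynomial.dickson 1 a n).derivative.eval c = 0 →
        (Polynomial.dickson 1 a n).eval c = 0) ∧
    (Polynomial.dickson 1 a n).rootMultiplicity 0 = 1 ∧
    (∀ c : AlgebraicClosure (ZMod 2), c ≠ 0 →
        (Polynomial.dickson 1 a n).eval c = 0 →
        (Polynomial.dickson 1 a n).rootMultiplicity c = 2) :=
  statement9_general a ha n hodd
end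

section
/- Let K be a field, f, g nonconstant polynomials in K[X], and b an element of the algebraic closure of K. Then e_{f∘g}(b) = e_f(g(b)) · e_g(b), where e_h(c) denotes the multiplicity of c as a root of h(X) - h(c). -/
open Polynomial

lemma rootMultiplicity_pow' {R : Type*} [CommRing R] [IsDomain R] {p : R[X]} (hp : p ≠ 0)
    (x : R) (n : ℕ) : rootMultiplicity x (p ^ n) = n * rootMultiplicity x p := by
  induction n with
  | zero => simp [rootMultiplicity_eq_zero]
  | succ n ih =>
    rw [pow_succ, rootMultiplicity_mul (mul_ne_zero (pow_ne_zero _ hp) hp), ih]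
    ring

/-- The ramification index `e_h(c)`: the multiplicity of `c` as a root of `h(X) - h(c)`,
where `c` lies in the algebraic closure of `K`. -/
noncomputable def ramIndex {K : Type} [Field K] (h : Polynomial K)
    (c : AlgebraicClosure K) : ℕ :=
  (h.map (algebraMap K (AlgebraicClosure K)) -
      Polynomial.C (Polynomial.aeval c h)).rootMultiplicity c

theorem statement10 (K : Type) [Field K] (f g : Polynomial K)
    (hf : 0 < f.natDegree) (hg : 0 < g.natDegree) (b : AlgebraicClosure K) :
    ramIndex (f.comp g) b = ramIndex f (Polynomial.aeval b g) * ramIndex g b := by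
  let L := AlgebraicClosure K
  let φ := algebraMap K L
  set F := f.map φ with hF
  set G := g.map φ with hG
  have hFd : F.natDegree = f.natDegree := natDegree_map φ
  have hGd : G.natDegree = g.natDegree := natDegree_map φ
  set a : L := G.eval b with ha
  have haeq : (Polynomial.aeval b g : L) = a := by rw [aeval_def, ← eval_map]
  have hfa : (Polynomial.aeval a f : L) = F.eval a := by rw [aeval_def, ← eval_map]
  -- decompose F - C (F.eval a)
  set P := F - C (F.eval a) with hP
  have hPne : P ≠ 0 := by
    intro h
    have : F = C (F.eval a) := by rw [← sub_eq_zero]; exact h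
    have := congrArg natDegree this
    simp [hFd, natDegree_C] at this
    omega
  set m := P.rootMultiplicity a with hm
  set q := P /ₘ (X - C a) ^ m with hq
  have hdecomp : (X - C a) ^ m * q = P := pow_mul_divByMonic_rootMultiplicity_eq P a
  have hqa : q.eval a ≠ 0 := eval_divByMonic_pow_rootMultiplicity_ne_zero a hPne
  -- G - C a
  set Q := G - C a with hQ
  have hQne : Q ≠ 0 := by
    intro h
    have : G = C a := by rw [← sub_eq_zero]; exact h
    have := congrArg natDegree this
    simp [hGd, natDegree_C] at this
    omega
  -- composed polynomial
  have hcomp : (f.comp g).map φ = F.comp G := map_comp φ f g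
  have hcval : (Polynomial.aeval b (f.comp g) : L) = F.eval a := by
    rw [aeval_def, ← eval_map, map_comp, eval_comp]
  have key : F.comp G - C (F.eval a) = Q ^ m * q.comp G := by
    have := congrArg (fun p => p.comp G) hdecomp
    simp only [mul_comp, pow_comp, sub_comp, X_comp, C_comp, hP] at this
    rw [← this]
  have hqGb : (q.comp G).eval b ≠ 0 := by rw [eval_comp]; exact hqa
  have hqGne : q.comp G ≠ 0 := fun h => hqGb (by rw [h]; simp)
  calc ramIndex (f.comp g) b
      = rootMultiplicity b (F.comp G - C (F.eval a)) := by
        rw [ramIndex, hcomp, hcval]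
    _ = rootMultiplicity b (Q ^ m * q.comp G) := by rw [key]
    _ = rootMultiplicity b (Q ^ m) + rootMultiplicity b (q.comp G) :=
        rootMultiplicity_mul (mul_ne_zero (pow_ne_zero _ hQne) hqGne)
    _ = m * rootMultiplicity b Q := by
        rw [rootMultiplicity_pow' hQne, rootMultiplicity_eq_zero (p := q.comp G) hqGb, add_zero]
    _ = ramIndex f (Polynomial.aeval b g) * ramIndex g b := by
        rw [ramIndex, ramIndex, haeq, hfa]
end

section
/- If f(X) in F_q[X] is exceptional over F_{q^m} for some positive integer m, then f(X) is exceptional over F_q. -/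
open MvPolynomial

/-- `f ∈ F[X]` is exceptional over `F` if the only polynomials in `F[X,Y]` dividing
`f(X) - f(Y)` that are irreducible over the algebraic closure of `F` are the scalar
multiples `c·(X - Y)` with `c ≠ 0`. -/
def IsExceptional (F : Type) [Field F] (f : Polynomial F) : Prop :=
  ∀ P : MvPolynomial (Fin 2) F,
    P ∣ (Polynomial.aeval (MvPolynomial.X 0) f - Polynomial.aeval (MvPolynomial.X 1) f) →
    Irreducible (MvPolynomial.map (algebraMap F (AlgebraicClosure F)) P) →
    ∃ c : F, c ≠ 0 ∧ P = MvPolynomial.C c * (MvPolynomial.X 0 - MvPolynomial.X 1)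

theorem statement12 (F : Type) [Field F] [Fintype F] (f : Polynomial F)
    (E : Type) [Field E] [Fintype E] [Algebra F E] (m : ℕ) (hm : 0 < m)
    (hcard : Fintype.card E = Fintype.card F ^ m)
    (hexc : IsExceptional E (f.map (algebraMap F E))) :
    IsExceptional F f := by
  have : Module.Finite F E := Module.Finite.of_finite
  have : Algebra.IsAlgebraic F E := Algebra.IsAlgebraic.of_finite F E
  let φ : AlgebraicClosure F ≃ₐ[F] AlgebraicClosure E := IsAlgClosure.equiv F _ _
  intro P hdvd hirr
  set ψ := algebraMap F E
  have hψ : Function.Injective ψ := (algebraMap F E).injective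
  -- map commutes with aeval of X i
  have key : ∀ i : Fin 2, MvPolynomial.map ψ (Polynomial.aeval (X i : MvPolynomial (Fin 2) F) f)
      = Polynomial.aeval (X i : MvPolynomial (Fin 2) E) (f.map ψ) := by
    intro i
    rw [Polynomial.aeval_def, Polynomial.aeval_def, Polynomial.eval₂_map,
      Polynomial.hom_eval₂, MvPolynomial.map_X]
    congr 1
    ext x
    simp [ψ]
  -- divisibility over E
  have hdvdE : MvPolynomial.map ψ P ∣
      (Polynomial.aeval (X 0 : MvPolynomial (Fin 2) E) (f.map ψ)
        - Polynomial.aeval (X 1 : MvPolynomial (Fin 2) E) (f.map ψ)) := by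
    rw [← key 0, ← key 1, ← map_sub]
    exact map_dvd (MvPolynomial.map ψ) hdvd
  -- irreducibility over the closure of E
  have hcomm : (algebraMap E (AlgebraicClosure E)).comp ψ
      = (φ : AlgebraicClosure F →+* AlgebraicClosure E).comp (algebraMap F (AlgebraicClosure F)) := by
    ext x
    simp [ψ, φ.commutes x, ← IsScalarTower.algebraMap_apply F E (AlgebraicClosure E)]
  have hirrE : Irreducible (MvPolynomial.map (algebraMap E (AlgebraicClosure E))
      (MvPolynomial.map ψ P)) := by
    rw [MvPolynomial.map_map, hcomm, ← MvPolynomial.map_map]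
    exact (MulEquiv.irreducible_iff (MvPolynomial.mapEquiv (Fin 2)
      (φ : AlgebraicClosure F ≃+* AlgebraicClosure E))).mpr hirr
  obtain ⟨c, hc0, hc⟩ := hexc (MvPolynomial.map ψ P) hdvdE hirrE
  -- extract c from F
  set s : Fin 2 →₀ ℕ := Finsupp.single 0 1
  have hcoef : ψ (P.coeff s) = c := by
    have := congrArg (fun Q => MvPolynomial.coeff s Q) hc
    simp only [MvPolynomial.coeff_map] at this
    rw [this]
    simp [s, mul_sub, MvPolynomial.coeff_sub, MvPolynomial.coeff_C_mul,
      MvPolynomial.coeff_X', Finsupp.single_left_inj]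
  refine ⟨P.coeff s, fun h => hc0 (by rw [← hcoef, h, map_zero]), ?_⟩
  apply MvPolynomial.map_injective ψ hψ
  rw [hc, map_mul, map_sub, MvPolynomial.map_C, MvPolynomial.map_X, MvPolynomial.map_X, hcoef]
end

section
/- Let q = 2^k with k a positive integer. Then X^6 permutes F_q if and only if k is odd, and this holds if and only if for every a in F_q the polynomial ((X+a)^6 + a^6)/X permutes F_q. -/
/-!
Over `𝔽_q`, `q = 2^k`, the map `x ↦ x^n` permutes `𝔽_q` exactly when `gcd(n, q - 1) = 1`, and
`3 ∣ 2^k - 1` exactly when `k` is even; this settles `x^6`.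

In characteristic 2, `((X + a)^6 + a^6) / X = X^5 + a^2 X^3 + a^4 X =: f_a`, and
`f_a t - f_a s = (t - s) (P^2 + P W^2 + W^4)` with `P = ts + a^2`, `W = t + s + a`. If
`z^2 + z + 1` has no root, then `x^2 + xy + y^2 = 0` forces `y = 0`; applied to `(P, W^2)` this gives
`W = P = 0`, so `t^2 + ta + a^2 = 0`, and applied to `(t, a)` it gives `a = 0`. Thus for `k` odd every
`f_a` with `a ≠ 0` is injective, and so is `f_0 = X^5` since `5 ∤ 2^k - 1`. For `k` even, a root `ω`
of `z^2 + z + 1` gives `f_1 ω = 0 = f_1 0`.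
-/

open Function Polynomial

theorem Nat.dvd_two_pow_sub_one_iff {n k : ℕ} : n ∣ 2 ^ k - 1 ↔ orderOf (2 : ZMod n) ∣ k := by
  rw [orderOf_dvd_iff_pow_eq_one, ← Nat.modEq_iff_dvd' Nat.one_le_two_pow,
    ← ZMod.natCast_eq_natCast_iff, eq_comm]
  push_cast
  rfl

theorem orderOf_two_zmod_three : orderOf (2 : ZMod 3) = 2 :=
  orderOf_eq_prime (by decide) (by decide)

theorem orderOf_two_zmod_five : orderOf (2 : ZMod 5) = 4 :=
  orderOf_eq_prime_pow (p := 2) (n := 1) (by decide) (by decide)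

theorem Nat.coprime_six_two_pow_sub_one_iff {k : ℕ} : Nat.Coprime 6 (2 ^ k - 1) ↔ Odd k := by
  rw [show 6 = 2 * 3 from rfl, Nat.coprime_mul_iff_left,
    Nat.prime_two.coprime_iff_not_dvd, Nat.prime_three.coprime_iff_not_dvd,
    Nat.dvd_two_pow_sub_one_iff, Nat.dvd_two_pow_sub_one_iff, orderOf_two_zmod_three,
    show (2 : ZMod 2) = 0 from rfl, orderOf_zero, zero_dvd_iff, ← even_iff_two_dvd,
    Nat.not_even_iff_odd]
  exact and_iff_right_of_imp fun hk h0 => Nat.not_odd_zero (h0 ▸ hk)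

theorem Nat.coprime_five_two_pow_sub_one {k : ℕ} (hk : Odd k) : Nat.Coprime 5 (2 ^ k - 1) := by
  rw [Nat.prime_five.coprime_iff_not_dvd, Nat.dvd_two_pow_sub_one_iff, orderOf_two_zmod_five]
  exact fun h4 => Nat.not_even_iff_odd.mpr hk (even_iff_two_dvd.mpr (dvd_trans (by norm_num) h4))

theorem charP_two_of_card_eq_two_pow {F : Type*} [Field F] [Fintype F] {k : ℕ}
    (hcard : Fintype.card F = 2 ^ k) : CharP F 2 := by
  have h2k : (2 : F) ^ k = 0 := by exact_mod_cast hcard ▸ FiniteField.cast_card_eq_zero F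
  exact CharTwo.of_one_ne_zero_of_two_eq_zero one_ne_zero (eq_zero_of_pow_eq_zero h2k)

section FiniteField

variable {F : Type*} [Field F] [Fintype F]

theorem FiniteField.exists_pow_eq_one_ne_one {p : ℕ} (hp : p.Prime)
    (hdvd : p ∣ Fintype.card F - 1) : ∃ z : F, z ^ p = 1 ∧ z ≠ 1 := by
  classical
  have : Fact p.Prime := ⟨hp⟩
  obtain ⟨u, hu⟩ := exists_prime_orderOf_dvd_card p (Fintype.card_units F ▸ hdvd)
  refine ⟨u, by rw [← Units.val_pow_eq_pow_val, ← hu, pow_orderOf_eq_one, Units.val_one], ?_⟩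
  rw [Ne, Units.val_eq_one, ← orderOf_eq_one_iff, hu]
  exact hp.ne_one

theorem FiniteField.pow_injective_of_coprime {n : ℕ} (hn : n ≠ 0)
    (h : n.Coprime (Fintype.card F - 1)) : Injective fun x : F => x ^ n := by
  have hunits : Injective fun u : Fˣ => u ^ n :=
    (Nat.Coprime.pow_left_bijective
      (by rw [Nat.card_units, Nat.card_eq_fintype_card]; exact h.symm)).injective
  intro x y hxy
  simp only at hxy
  have hzero : x = 0 ↔ y = 0 := by rw [← pow_eq_zero_iff hn, hxy, pow_eq_zero_iff hn]
  rcases eq_or_ne y 0 with rfl | hy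
  · exact hzero.mpr rfl
  have hx : x ≠ 0 := hzero.not.mpr hy
  simpa using congrArg Units.val (@hunits (Units.mk0 x hx) (Units.mk0 y hy) (Units.ext (by simpa)))

theorem FiniteField.pow_bijective_iff_coprime {n : ℕ} (hn : n ≠ 0) :
    Bijective (fun x : F => x ^ n) ↔ n.Coprime (Fintype.card F - 1) := by
  refine ⟨fun hbij => ?_, fun h => (pow_injective_of_coprime hn h).bijective_of_finite⟩
  by_contra hnot
  obtain ⟨p, hp, hpn, hpq⟩ := Nat.Prime.not_coprime_iff_dvd.mp hnot
  obtain ⟨z, hz, hz1⟩ := exists_pow_eq_one_ne_one hp hpq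
  obtain ⟨m, rfl⟩ := hpn
  exact hz1 (hbij.injective (by simp only [pow_mul, hz, one_pow]))

theorem FiniteField.exists_sq_add_add_one_eq_zero_iff (h3 : (3 : F) ≠ 0) :
    (∃ z : F, z ^ 2 + z + 1 = 0) ↔ 3 ∣ Fintype.card F - 1 := by
  rw [← not_not (a := 3 ∣ _), ← Nat.prime_three.coprime_iff_not_dvd]
  constructor
  · rintro ⟨z, hz⟩ hcop
    have hz1 : z ≠ 1 := by rintro rfl; exact h3 (by linear_combination hz)
    exact hz1 (pow_injective_of_coprime three_ne_zero hcop
      (by simp only [one_pow]; linear_combination (z - 1) * hz))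
  · intro hnot
    obtain ⟨z, hz, hz1⟩ := exists_pow_eq_one_ne_one Nat.prime_three
      (not_not.mp (Nat.prime_three.coprime_iff_not_dvd.not.mp hnot))
    have hfac : (z - 1) * (z ^ 2 + z + 1) = 0 := by linear_combination hz
    exact ⟨z, (mul_eq_zero.mp hfac).resolve_left (sub_ne_zero.mpr hz1)⟩

end FiniteField

theorem eq_zero_of_sq_add_mul_add_sq_eq_zero {F : Type*} [Field F]
    (hroot : ∀ z : F, z ^ 2 + z + 1 ≠ 0) {x y : F} (h : x ^ 2 + x * y + y ^ 2 = 0) : y = 0 := by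
  by_contra hy
  apply hroot (x / y)
  field_simp
  linear_combination h

section CharTwo

variable {F : Type*} [Field F] [CharP F 2]

theorem CharTwo.X_add_C_pow_six_add_C_div_X (a : F) :
    ((X + C a) ^ 6 + C (a ^ 6)) / X = X ^ 5 + C (a ^ 2) * X ^ 3 + C (a ^ 4) * X := by
  have hmul : ((X + C a) ^ 6 + C (a ^ 6) : F[X]) =
      X * (X ^ 5 + C (a ^ 2) * X ^ 3 + C (a ^ 4) * X) := by
    simp only [map_pow]
    ring_nf
    reduce_mod_char!
  rw [hmul, mul_div_cancel_left₀ _ X_ne_zero]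

theorem CharTwo.injective_pow_five_add_sq_mul_pow_three_add
    (hroot : ∀ z : F, z ^ 2 + z + 1 ≠ 0) {a : F} (ha : a ≠ 0) :
    Injective fun x : F => x ^ 5 + a ^ 2 * x ^ 3 + a ^ 4 * x := by
  intro t s hts
  simp only at hts
  by_contra hne
  have hsub : t - s ≠ 0 := sub_ne_zero.mpr hne
  have hfac : (t - s) * ((t * s + a ^ 2) ^ 2 + (t * s + a ^ 2) * (t + s + a) ^ 2
      + ((t + s + a) ^ 2) ^ 2) = 0 := by
    rw [← sub_eq_zero.mpr hts]
    ring_nf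
    reduce_mod_char!
  have hW : t + s + a = 0 := (pow_eq_zero_iff two_ne_zero).mp <|
    eq_zero_of_sq_add_mul_add_sq_eq_zero hroot ((mul_eq_zero.mp hfac).resolve_left hsub)
  have hP : t * s + a ^ 2 = 0 := by
    have h := (mul_eq_zero.mp hfac).resolve_left hsub
    rw [hW] at h
    simpa using h
  have hs : s = t + a := by linear_combination hW - (t + a) * CharTwo.two_eq_zero (R := F)
  -- `t` is a root of `z^2 + (t + s) z + t s = z^2 + a z + a^2`
  refine ha (eq_zero_of_sq_add_mul_add_sq_eq_zero hroot (x := t) ?_)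
  rw [hs] at hP
  linear_combination hP

theorem statement15_general (F : Type) [Field F] [Fintype F] (k : ℕ)
    (hcard : Fintype.card F = 2 ^ k) :
    (Function.Bijective (fun x : F => x ^ 6) ↔ Odd k) ∧
    (Odd k ↔ ∀ a : F, Function.Bijective fun x : F =>
        (((Polynomial.X + Polynomial.C a) ^ 6 + Polynomial.C (a ^ 6)) /
            Polynomial.X).eval x) := by
  have : CharP F 2 := charP_two_of_card_eq_two_pow hcard
  have h3 : (3 : F) ≠ 0 := fun h =>
    one_ne_zero (by linear_combination h - CharTwo.two_eq_zero (R := F))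
  have hsix : Bijective (fun x : F => x ^ 6) ↔ Odd k := by
    rw [FiniteField.pow_bijective_iff_coprime (by norm_num), hcard,
      Nat.coprime_six_two_pow_sub_one_iff]
  have hroot : (∃ z : F, z ^ 2 + z + 1 = 0) ↔ ¬Odd k := by
    rw [FiniteField.exists_sq_add_add_one_eq_zero_iff h3, hcard, Nat.dvd_two_pow_sub_one_iff,
      orderOf_two_zmod_three, ← even_iff_two_dvd, Nat.not_odd_iff_even]
  simp only [CharTwo.X_add_C_pow_six_add_C_div_X, eval_add, eval_mul, eval_pow, eval_C, eval_X]
  refine ⟨hsix, fun hk a => ?_, fun h => ?_⟩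
  · rcases eq_or_ne a 0 with rfl | ha
    · simpa only [ne_eq, OfNat.ofNat_ne_zero, not_false_eq_true, zero_pow, zero_mul, add_zero]
        using (FiniteField.pow_bijective_iff_coprime (by norm_num)).mpr
        (hcard ▸ Nat.coprime_five_two_pow_sub_one hk)
    · exact (CharTwo.injective_pow_five_add_sq_mul_pow_three_add
        (fun z hz => hroot.mp ⟨z, hz⟩ hk) ha).bijective_of_finite
  · by_contra hk
    obtain ⟨z, hz⟩ := hroot.mpr hk
    have hz0 : z ≠ 0 := by rintro rfl; norm_num at hz
    exact hz0 ((h 1).injective (by linear_combination z * (z ^ 2 - z + 1) * hz))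

theorem statement15 (F : Type) [Field F] [Fintype F] (k : ℕ) (hk : 0 < k)
    (hcard : Fintype.card F = 2 ^ k) :
    (Function.Bijective (fun x : F => x ^ 6) ↔ Odd k) ∧
    (Odd k ↔ ∀ a : F, Function.Bijective fun x : F =>
        (((Polynomial.X + Polynomial.C a) ^ 6 + Polynomial.C (a ^ 6)) /
            Polynomial.X).eval x) :=
  statement15_general F k hcard
end CharTwo
end

section
/- Let q be an odd prime power and f(X) in F_q[X] a polynomial that permutes F_q. Then there is no a in F_q for which the polynomial g_a(X) := (f(X+a) - f(a))/X also permutes F_q. -/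
open Polynomial Finset

lemma prod_erase_zero_eq_neg_one (F : Type) [Field F] [Fintype F] [DecidableEq F] :
    ∏ x ∈ Finset.univ.erase (0 : F), x = -1 := by
  have h := FiniteField.prod_univ_units_id_eq_neg_one (K := F)
  have : ((∏ u : Fˣ, u : Fˣ) : F) = ∏ u : Fˣ, (u : F) := by
    exact map_prod (Units.coeHom F) _ _
  rw [h] at this
  push_cast at this
  rw [this]
  refine Finset.prod_bij (fun x hx => Units.mk0 x (Finset.mem_erase.mp hx).1) ?_ ?_ ?_ ?_
  · intro x _; exact Finset.mem_univ _
  · intro x hx y hy hxy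
    simpa using congrArg Units.val hxy
  · intro u _
    exact ⟨(u : F), Finset.mem_erase.mpr ⟨u.ne_zero, Finset.mem_univ _⟩, Units.ext rfl⟩
  · intros; rfl

lemma prod_erase_zero_bij (F : Type) [Field F] [Fintype F] [DecidableEq F] (e : F → F)
    (he : Function.Bijective e) (h0 : e 0 = 0) :
    ∏ x ∈ Finset.univ.erase (0 : F), e x = ∏ x ∈ Finset.univ.erase (0 : F), x := by
  apply Finset.prod_bij (fun x _ => e x)
  · intro x hx
    simp only [Finset.mem_erase, Finset.mem_univ, and_true] at hx ⊢
    intro h; exact hx (he.1 (h.trans h0.symm))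
  · intro x _ y _ h; exact he.1 h
  · intro y hy
    obtain ⟨x, rfl⟩ := he.2 y
    refine ⟨x, Finset.mem_erase.mpr ⟨?_, Finset.mem_univ _⟩, rfl⟩
    rintro rfl
    exact (Finset.mem_erase.mp hy).1 h0
  · intros; rfl

theorem statement17 (F : Type) [Field F] [Fintype F] (hodd : Odd (Fintype.card F))
    (f : Polynomial F) (hf : Function.Bijective fun x : F => f.eval x) :
    ¬ ∃ a : F, Function.Bijective fun x : F =>
        ((f.comp (Polynomial.X + Polynomial.C a) - Polynomial.C (f.eval a)) /
            Polynomial.X).eval x := by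
  classical
  rintro ⟨a, hg⟩
  set p : Polynomial F := f.comp (Polynomial.X + Polynomial.C a) - Polynomial.C (f.eval a) with hp
  set g : Polynomial F := p / Polynomial.X with hgdef
  have hdvd : Polynomial.X ∣ p := by
    rw [Polynomial.X_dvd_iff, Polynomial.coeff_zero_eq_eval_zero]
    simp [hp]
  have hpg : Polynomial.X * g = p := EuclideanDomain.mul_div_cancel' Polynomial.X_ne_zero hdvd
  -- key evaluation identity
  have key : ∀ x : F, x * g.eval x = f.eval (x + a) - f.eval a := by
    intro x
    have := congrArg (Polynomial.eval x) hpg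
    simpa [hp] using this
  -- e is bijective with e 0 = 0
  set e : F → F := fun x => f.eval (x + a) - f.eval a with hedef
  have he : Function.Bijective e := by
    have h1 : Function.Bijective (fun x : F => x + a) := ⟨add_left_injective a, fun y => ⟨y - a, by ring⟩⟩
    have h2 : Function.Bijective (fun y : F => y - f.eval a) :=
      ⟨sub_left_injective, fun y => ⟨y + f.eval a, by ring⟩⟩
    exact h2.comp (hf.comp h1)
  have he0 : e 0 = 0 := by simp [hedef]
  -- g.eval x ≠ 0 for x ≠ 0
  have hgne : ∀ x : F, x ≠ 0 → g.eval x ≠ 0 := by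
    intro x hx hgx
    have := key x
    rw [hgx, mul_zero] at this
    have : e x = 0 := this.symm
    exact hx (he.1 (this.trans he0.symm))
  have hg0 : g.eval 0 = 0 := by
    obtain ⟨x, hx⟩ := hg.2 0
    by_contra h
    rcases eq_or_ne x 0 with rfl | hxne
    · exact h hx
    · exact hgne x hxne hx
  -- products
  have P := prod_erase_zero_eq_neg_one F
  have hPg : ∏ x ∈ Finset.univ.erase (0 : F), g.eval x = -1 :=
    (prod_erase_zero_bij F _ hg hg0).trans P
  have hPe : ∏ x ∈ Finset.univ.erase (0 : F), e x = -1 :=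
    (prod_erase_zero_bij F _ he he0).trans P
  have hprod : ∏ x ∈ Finset.univ.erase (0 : F), (x * g.eval x)
      = ∏ x ∈ Finset.univ.erase (0 : F), e x :=
    Finset.prod_congr rfl fun x _ => key x
  rw [Finset.prod_mul_distrib, P, hPg, hPe] at hprod
  rw [neg_mul_neg, one_mul] at hprod
  have hchar : ringChar F ≠ 2 := by
    intro h2
    have := FiniteField.even_card_of_char_two h2
    rw [Nat.odd_iff] at hodd
    omega
  exact Ring.neg_one_ne_one_of_char_ne_two hchar hprod.symm
end

section
/- If q is an odd prime power and S is a (q+2)-element subset of P^2(F_q), then there are at most two points P in S with the property that no line through P contains more than two points of S. -/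
/-!
Three points of `S` lying on no trisecant are not collinear, so their representatives form a basis
of `F³`. The other `q - 1` points of `S` then have all three coordinates nonzero, and for `i ≠ j`
the ratio `xᵢ / xⱼ` is injective on them: two points with the same ratio lie on a common line
through the third base point. So each ratio takes every value of `Fˣ` exactly once and its product
is `-1` by Wilson's theorem. The products of `x₀ / x₁`, `x₁ / x₂`, `x₂ / x₀` multiply to `1`,
whence `(-1)³ = 1` and `q` is even.
-/

open scoped LinearAlgebra.Projectivization
open Projectivization Module

namespace FiniteField

theorem prod_eq_neg_one_of_injOn {K α : Type*} [Field K] [Fintype K] {s : Finset α} {f : α → K}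
    (hf : Set.InjOn f s) (hf0 : ∀ x ∈ s, f x ≠ 0) (hs : s.card = Fintype.card K - 1) :
    ∏ x ∈ s, f x = -1 := by
  classical
  let g : s → Kˣ := fun x => Units.mk0 (f x) (hf0 x x.2)
  have hg : Function.Bijective g := by
    rw [Fintype.bijective_iff_injective_and_card, Fintype.card_coe, hs, Fintype.card_units]
    exact ⟨fun x y h => Subtype.ext (hf x.2 y.2 (congrArg Units.val h)), rfl⟩
  calc ∏ x ∈ s, f x = ∏ x : s, (g x : K) := (Finset.prod_coe_sort s f).symm
    _ = ∏ u : Kˣ, (u : K) := Fintype.prod_bijective g hg _ _ fun _ => rfl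
    _ = -1 := by rw [← Units.coe_prod, prod_univ_units_id_eq_neg_one, Units.val_neg, Units.val_one]

end FiniteField

namespace Projectivization

variable {K V : Type*} [Field K] [AddCommGroup V] [Module K V]

def NoTrisecantThrough (S : Set (ℙ K V)) (P : ℙ K V) : Prop :=
  ∀ W : Submodule K V, finrank K W = 2 → P.submodule ≤ W → {x ∈ S | x.submodule ≤ W}.ncard ≤ 2

variable {S : Set (ℙ K V)} {P Q Q' : ℙ K V}

theorem submodule_le_ker_iff {f : Dual K V} : P.submodule ≤ LinearMap.ker f ↔ f P.rep = 0 := by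
  rw [submodule_eq, Submodule.span_singleton_le_iff_mem, LinearMap.mem_ker]

theorem NoTrisecantThrough.eq_of_submodule_le (h : NoTrisecantThrough S P) (hS : S.Finite)
    (hP : P ∈ S) {W : Submodule K V} (hW : finrank K W = 2) (hPW : P.submodule ≤ W)
    (hQ : Q ∈ S) (hQ' : Q' ∈ S) (hQP : Q ≠ P) (hQ'P : Q' ≠ P)
    (hQW : Q.submodule ≤ W) (hQ'W : Q'.submodule ≤ W) : Q = Q' := by
  by_contra hQQ'
  have hsub : ({P, Q, Q'} : Set (ℙ K V)) ⊆ {x ∈ S | x.submodule ≤ W} := by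
    rintro x (rfl | rfl | rfl)
    exacts [⟨hP, hPW⟩, ⟨hQ, hQW⟩, ⟨hQ', hQ'W⟩]
  have hle := Set.ncard_le_ncard hsub (hS.subset (Set.sep_subset _ _))
  rw [Set.ncard_eq_three.mpr ⟨P, Q, Q', hQP.symm, hQ'P.symm, hQQ', rfl⟩] at hle
  exact absurd (hle.trans (h W hW hPW)) (by norm_num)

theorem NoTrisecantThrough.eq_of_apply_rep_eq_zero (h : NoTrisecantThrough S P)
    (hV : finrank K V = 3) (hS : S.Finite) (hP : P ∈ S) {f : Dual K V} (hf : f ≠ 0)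
    (hfP : f P.rep = 0) (hQ : Q ∈ S) (hQ' : Q' ∈ S) (hQP : Q ≠ P) (hQ'P : Q' ≠ P)
    (hfQ : f Q.rep = 0) (hfQ' : f Q'.rep = 0) : Q = Q' := by
  have : FiniteDimensional K V := Module.finite_of_finrank_eq_succ hV
  have hker : finrank K (LinearMap.ker f) = 2 := by
    have := f.finrank_ker_add_one_of_ne_zero hf
    omega
  exact h.eq_of_submodule_le hS hP hker (submodule_le_ker_iff.mpr hfP) hQ hQ' hQP hQ'P
    (submodule_le_ker_iff.mpr hfQ) (submodule_le_ker_iff.mpr hfQ')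

theorem linearIndependent_rep_of_noTrisecantThrough (hS : S.Finite) {P₀ P₁ P₂ : ℙ K V}
    (hP₀ : P₀ ∈ S) (hP₁ : P₁ ∈ S) (hP₂ : P₂ ∈ S) (h₀₁ : P₀ ≠ P₁) (h₀₂ : P₀ ≠ P₂) (h₁₂ : P₁ ≠ P₂)
    (h : NoTrisecantThrough S P₁) : LinearIndependent K ![P₀.rep, P₁.rep, P₂.rep] := by
  have h₁₂' : LinearIndependent K ![P₁.rep, P₂.rep] :=
    (independent_mk_iff_LinearIndependent (rep_nonzero P₁) (rep_nonzero P₂)).mp (by simpa)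
  refine linearIndependent_finCons.mpr ⟨h₁₂', fun hmem => h₀₂ ?_⟩
  have hW : finrank K (Submodule.span K (Set.range ![P₁.rep, P₂.rep])) = 2 := by
    rw [finrank_span_eq_card h₁₂']
    simp
  have hle : ∀ {R : ℙ K V}, R.rep ∈ Submodule.span K (Set.range ![P₁.rep, P₂.rep]) →
      R.submodule ≤ Submodule.span K (Set.range ![P₁.rep, P₂.rep]) := fun hR => by
    rwa [submodule_eq, Submodule.span_singleton_le_iff_mem]
  exact h.eq_of_submodule_le hS hP₁ hW (hle (Submodule.subset_span ⟨0, rfl⟩)) hP₀ hP₂ h₀₁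
    h₁₂.symm (hle hmem) (hle (Submodule.subset_span ⟨1, rfl⟩))

section Frame

variable (b : Basis (Fin 3) K V) {P : Fin 3 → ℙ K V}

theorem injective_of_rep_eq_basis (hb : ∀ k, (P k).rep = b k) : Function.Injective P :=
  fun k l h => b.injective (by rw [← hb, ← hb, h])

theorem repr_rep_ne_zero_of_noTrisecantThrough (hb : ∀ k, (P k).rep = b k) (hS : S.Finite)
    (hPS : ∀ k, P k ∈ S) (hfree : ∀ k, NoTrisecantThrough S (P k)) (hQ : Q ∈ S)
    (hQP : Q ∉ Set.range P) (i : Fin 3) : b.repr Q.rep i ≠ 0 := by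
  obtain ⟨j, k, hji, hki, hjk⟩ : ∃ j k : Fin 3, j ≠ i ∧ k ≠ i ∧ j ≠ k := by
    revert i; decide
  intro hQi
  refine hQP ⟨k, (hfree j).eq_of_apply_rep_eq_zero (by simp [finrank_eq_card_basis b]) hS
    (hPS j) (f := b.coord i) ?_ ?_ (hPS k) hQ ((injective_of_rep_eq_basis b hb).ne hjk.symm)
    ?_ ?_ ?_⟩
  · exact fun h0 => by simpa using congrArg (· (b i)) h0
  · simp [hb, hji]
  · exact fun h => hQP ⟨j, h.symm⟩
  · simp [hb, hki]
  · simpa using hQi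

theorem injOn_repr_rep_div_of_noTrisecantThrough (hb : ∀ k, (P k).rep = b k) (hS : S.Finite)
    (hPS : ∀ k, P k ∈ S) (hfree : ∀ k, NoTrisecantThrough S (P k)) {i j : Fin 3} (hij : i ≠ j) :
    Set.InjOn (fun Q => b.repr Q.rep i / b.repr Q.rep j) (S \ Set.range P) := by
  obtain ⟨k, hki, hkj⟩ : ∃ k : Fin 3, k ≠ i ∧ k ≠ j := by
    revert i j; decide
  rintro Q ⟨hQ, hQP⟩ Q' ⟨hQ', hQ'P⟩ hQQ'
  have hQj := repr_rep_ne_zero_of_noTrisecantThrough b hb hS hPS hfree hQ hQP j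
  have hQ'j := repr_rep_ne_zero_of_noTrisecantThrough b hb hS hPS hfree hQ' hQ'P j
  refine (hfree k).eq_of_apply_rep_eq_zero (by simp [finrank_eq_card_basis b]) hS (hPS k)
    (f := b.coord i - (b.repr Q.rep i / b.repr Q.rep j) • b.coord j) ?_ ?_ hQ hQ'
    (fun h => hQP ⟨k, h.symm⟩) (fun h => hQ'P ⟨k, h.symm⟩) ?_ ?_
  · exact fun h0 => by simpa [hij] using congrArg (· (b i)) h0
  · simp [hb, hki, hkj]
  · simp only [LinearMap.sub_apply, LinearMap.smul_apply, Basis.coord_apply, smul_eq_mul]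
    field_simp
    ring
  · simp only [LinearMap.sub_apply, LinearMap.smul_apply, Basis.coord_apply, smul_eq_mul]
    rw [show b.repr Q.rep i / b.repr Q.rep j = _ from hQQ']
    field_simp
    ring

theorem two_eq_zero_of_noTrisecantThrough [Fintype K] (hb : ∀ k, (P k).rep = b k)
    (hS : S.Finite) (hPS : ∀ k, P k ∈ S) (hfree : ∀ k, NoTrisecantThrough S (P k))
    (hcard : S.ncard = Fintype.card K + 2) : (2 : K) = 0 := by
  set T := (hS.sdiff (t := Set.range P)).toFinset
  have hT : T.card = Fintype.card K - 1 := by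
    rw [← Set.ncard_eq_toFinset_card _ hS.sdiff, Set.ncard_sdiff (Set.range_subset_iff.mpr hPS),
      Set.ncard_range_of_injective (injective_of_rep_eq_basis b hb), hcard,
      Nat.card_eq_fintype_card, Fintype.card_fin]
    omega
  have hne : ∀ Q ∈ T, ∀ i, b.repr Q.rep i ≠ 0 := fun Q hQ => by
    simp only [T, Set.Finite.mem_toFinset, Set.mem_sdiff] at hQ
    exact repr_rep_ne_zero_of_noTrisecantThrough b hb hS hPS hfree hQ.1 hQ.2
  have hprod : ∀ i j : Fin 3, i ≠ j → ∏ Q ∈ T, b.repr Q.rep i / b.repr Q.rep j = -1 :=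
    fun i j hij => FiniteField.prod_eq_neg_one_of_injOn
      (by simpa [T] using injOn_repr_rep_div_of_noTrisecantThrough b hb hS hPS hfree hij)
      (fun Q hQ => div_ne_zero (hne Q hQ i) (hne Q hQ j)) hT
  have hcycle : ∏ Q ∈ T, (b.repr Q.rep 0 / b.repr Q.rep 1 * (b.repr Q.rep 1 / b.repr Q.rep 2)
      * (b.repr Q.rep 2 / b.repr Q.rep 0)) = 1 := by
    refine Finset.prod_eq_one fun Q hQ => ?_
    have h₀ := hne Q hQ 0
    have h₁ := hne Q hQ 1
    have h₂ := hne Q hQ 2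
    field_simp
  rw [Finset.prod_mul_distrib, Finset.prod_mul_distrib, hprod 0 1 (by decide),
    hprod 1 2 (by decide), hprod 2 0 (by decide)] at hcycle
  linear_combination -hcycle

end Frame

end Projectivization

theorem statement18 (F : Type) [Field F] [Fintype F] (hodd : Odd (Fintype.card F))
    (S : Set (Projectivization F (Fin 3 → F)))
    (hcard : S.ncard = Fintype.card F + 2) :
    {P ∈ S | ∀ W : Submodule F (Fin 3 → F), Module.finrank F W = 2 →
        P.submodule ≤ W → {x ∈ S | x.submodule ≤ W}.ncard ≤ 2}.ncard ≤ 2 := by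
  by_contra! h
  obtain ⟨P₀, ⟨hP₀, h₀⟩, P₁, ⟨hP₁, h₁⟩, P₂, ⟨hP₂, h₂⟩, h₀₁, h₀₂, h₁₂⟩ :=
    (Set.two_lt_ncard (S.toFinite.sep _)).mp h
  have hind := linearIndependent_rep_of_noTrisecantThrough S.toFinite hP₀ hP₁ hP₂ h₀₁ h₀₂ h₁₂ h₁
  let b := basisOfLinearIndependentOfCardEqFinrank hind (by simp)
  have h2 : (2 : F) = 0 := two_eq_zero_of_noTrisecantThrough b (P := ![P₀, P₁, P₂])
    (fun k => by fin_cases k <;> simp [b]) S.toFinite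
    (fun k => by fin_cases k <;> assumption) (fun k => by fin_cases k <;> assumption) hcard
  have hchar : ringChar F = 2 :=
    CharP.ringChar_of_prime_eq_zero Nat.prime_two (by exact_mod_cast h2)
  rw [FiniteField.even_card_iff_char_two, ← Nat.even_iff] at hchar
  exact Nat.not_even_iff_odd.mpr hodd hchar
end
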